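/- arXiv:1809.05432 — 9 statements merged into one kernel-verified Lean document; each statement's English description precedes it below -/
import Mathlib

section
/- If R is a finite ring with identity such that a^{|R|} = a for all a in R, then the natural map R → ∏_M R/M, where M ranges over all maximal ideals of R, is injective. -/
/-! Two elements with the same residues modulo every maximal ideal differ by an element `c` of the
Jacobson radical. Writing `|R| = k + 2`, the hypothesis gives `c * (1 - c ^ (k + 1)) = 0`, and
`1 - c ^ (k + 1)` is a unit because `c ^ (k + 1)` lies in the Jacobson radical; hence `c = 0`. -/

namespace Ideal

variable {R : Type*} [CommRing R]

theorem mem_jacobson_bot_of_forall_isMaximal {x : R} (hx : ∀ M : Ideal R, M.IsMaximal → x ∈ M) :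
    x ∈ (⊥ : Ideal R).jacobson :=
  mem_sInf.2 fun M hM => hx M hM.2

theorem eq_zero_of_mem_jacobson_bot_of_pow_eq_self {c : R} (hc : c ∈ (⊥ : Ideal R).jacobson)
    {k : ℕ} (hck : c ^ (k + 2) = c) : c = 0 := by
  have hunit : IsUnit (1 - c ^ (k + 1)) := by
    simpa [pow_succ', sub_eq_neg_add, mul_comm] using mem_jacobson_bot.1 hc (-c ^ k)
  have hzero : c * (1 - c ^ (k + 1)) = 0 := by
    rw [mul_sub, mul_one, ← pow_succ', hck, sub_self]
  exact hunit.mul_left_eq_zero.1 hzero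

end Ideal

/-- If `R` is a finite commutative ring with identity such that `a ^ |R| = a` for all `a ∈ R`,
then the natural map `R → ∏_M R/M`, where `M` ranges over all maximal ideals of `R`,
is injective. -/
theorem carmichael_ring_map_injective (R : Type) [CommRing R] [Fintype R]
    (h : ∀ a : R, a ^ Fintype.card R = a) :
    Function.Injective
      (fun a : R => fun M : {I : Ideal R // I.IsMaximal} => Ideal.Quotient.mk M.1 a) := by
  intro a b hab
  obtain hR | hR := subsingleton_or_nontrivial R
  · exact Subsingleton.elim a b
  have hjac : a - b ∈ (⊥ : Ideal R).jacobson :=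
    Ideal.mem_jacobson_bot_of_forall_isMaximal fun M hM =>
      Ideal.Quotient.eq.1 (congrFun hab ⟨M, hM⟩)
  obtain ⟨k, hk⟩ : ∃ k, Fintype.card R = k + 2 :=
    Nat.exists_eq_add_of_le' Fintype.one_lt_card
  rw [← sub_eq_zero]
  exact Ideal.eq_zero_of_mem_jacobson_bot_of_pow_eq_self hjac (hk ▸ h (a - b))
end

section
/- Let F_{q_1}, F_{q_2} be finite fields with q_1 ≠ q_2. Then the ring R = F_{q_1} × F_{q_2} is not a Carmichael ring; that is, there exists a ∈ R with a^{|R|} ≠ a. -/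
/-!
Let `q₁ > q₂`. If `a ^ (q₁ q₂) = a` held on all of `F₁`, then applied to a generator of the
cyclic group `F₁ˣ` it would give `q₁ - 1 ∣ q₁ q₂ - 1 = (q₁ - 1) q₂ + (q₂ - 1)`, hence
`q₁ - 1 ∣ q₂ - 1`, which is impossible since `0 < q₂ - 1 < q₁ - 1`.
-/

theorem FiniteField.forall_pow_eq_self_iff {K : Type*} [Field K] [Fintype K] {n : ℕ}
    (hn : n ≠ 0) : (∀ a : K, a ^ n = a) ↔ Fintype.card K - 1 ∣ n - 1 := by
  obtain ⟨m, rfl⟩ := Nat.exists_eq_add_one_of_ne_zero hn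
  rw [Nat.add_sub_cancel, ← FiniteField.forall_pow_eq_one_iff]
  constructor
  · intro h x
    refine Units.ext (mul_right_cancel₀ x.ne_zero ?_)
    simpa [← pow_succ] using h x
  · intro h a
    rcases eq_or_ne a 0 with rfl | ha
    · simp
    · have ham : a ^ m = 1 := by simpa using congrArg Units.val (h (Units.mk0 a ha))
      rw [pow_succ, ham, one_mul]

theorem Nat.not_sub_one_dvd_mul_sub_one {q m : ℕ} (hm : 2 ≤ m) (hmq : m < q) :
    ¬ q - 1 ∣ q * m - 1 := by
  have hsplit : q * m - 1 = (q - 1) * m + (m - 1) := by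
    rw [Nat.sub_mul, one_mul]
    have : m ≤ q * m := Nat.le_mul_of_pos_left m (by omega)
    omega
  rw [hsplit, Nat.dvd_add_right (dvd_mul_right _ _)]
  intro hdvd
  have := Nat.le_of_dvd (by omega) hdvd
  omega

theorem FiniteField.exists_pow_mul_ne_self {K : Type*} [Field K] [Fintype K] {m : ℕ}
    (hm : 2 ≤ m) (hmK : m < Fintype.card K) : ∃ a : K, a ^ (Fintype.card K * m) ≠ a := by
  by_contra! hall
  exact Nat.not_sub_one_dvd_mul_sub_one hm hmK
    ((forall_pow_eq_self_iff (by positivity)).mp hall)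

/-- If `F₁`, `F₂` are finite fields with different cardinalities, then `F₁ × F₂` is not a
Carmichael ring: there is `a ∈ F₁ × F₂` with `a ^ |F₁ × F₂| ≠ a`. -/
theorem prod_two_fields_not_carmichael (F₁ F₂ : Type) [Field F₁] [Field F₂]
    [Fintype F₁] [Fintype F₂] (h : Fintype.card F₁ ≠ Fintype.card F₂) :
    ∃ a : F₁ × F₂, a ^ Fintype.card (F₁ × F₂) ≠ a := by
  rw [Fintype.card_prod]
  rcases h.lt_or_gt with hlt | hlt
  · obtain ⟨b, hb⟩ := FiniteField.exists_pow_mul_ne_self (K := F₂) Fintype.one_lt_card hlt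
    refine ⟨(1, b), fun heq => hb ?_⟩
    rw [mul_comm]
    exact congrArg Prod.snd heq
  · obtain ⟨a, ha⟩ := FiniteField.exists_pow_mul_ne_self (K := F₁) Fintype.one_lt_card hlt
    exact ⟨(a, 1), fun heq => ha (congrArg Prod.fst heq)⟩
end

section
/- A squarefree, non-irreducible, nonconstant polynomial g ∈ F_q[t] satisfies f^{q^{deg g}} ≡ f (mod g) for all f ∈ F_q[t] if and only if for every monic irreducible factor P of g, deg P divides deg g. -/
/-!
Since `f ^ q ^ n = f.comp (X ^ q ^ n)` over `𝔽_q`, and `X ^ q ^ n - X` divides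
`f.comp (X ^ q ^ n) - f.comp X`, the congruence `f ^ q ^ n ≡ f (mod g)` holds for all `f` exactly
when `g ∣ X ^ q ^ n - X`. A squarefree `g` divides `X ^ q ^ n - X` iff each of its irreducible
factors `P` does, i.e. iff the roots of `P`, which generate `𝔽_{q ^ deg P}`, lie in `𝔽_{q ^ n}`,
i.e. iff `deg P ∣ n`.
-/

open Polynomial UniqueFactorizationMonoid

theorem Squarefree.dvd_of_forall_mem_primeFactors_dvd {M : Type*} [CommMonoidWithZero M]
    [Nontrivial M] [NormalizationMonoid M] [UniqueFactorizationMonoid M] {a b : M}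
    (ha : Squarefree a) (H : ∀ p ∈ primeFactors a, p ∣ b) : a ∣ b :=
  (radical_associated ha.isRadical ha.ne_zero).symm.dvd.trans
    (Finset.prod_dvd_of_isRelPrime pairwise_primeFactors_isRelPrime H)

theorem Polynomial.sub_dvd_comp_sub {R : Type*} [CommRing R] (f p r : R[X]) :
    p - r ∣ f.comp p - f.comp r := by
  have h := sub_dvd_eval_sub p r (f.map C)
  rwa [eval_map, eval_map] at h

namespace FiniteField

variable {K : Type*} [Field K] [Fintype K]

theorem expand_card_pow (f : K[X]) (n : ℕ) :
    expand K (Fintype.card K ^ n) f = f ^ Fintype.card K ^ n := by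
  induction n with
  | zero => simp
  | succ n ih => rw [pow_succ', expand_mul, ih, expand_card, ← pow_mul, mul_comm]

theorem forall_dvd_pow_card_pow_sub_self_iff (g : K[X]) (n : ℕ) :
    (∀ f : K[X], g ∣ f ^ Fintype.card K ^ n - f) ↔ g ∣ X ^ Fintype.card K ^ n - X := by
  refine ⟨fun h ↦ h X, fun h f ↦ ?_⟩
  have hcomp := h.trans (sub_dvd_comp_sub f (X ^ Fintype.card K ^ n) X)
  rwa [← expand_eq_comp_X_pow, expand_card_pow, comp_X] at hcomp

theorem _root_.Squarefree.dvd_X_pow_card_pow_sub_X_iff {g : K[X]} (hg : Squarefree g) (n : ℕ) :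
    g ∣ X ^ Fintype.card K ^ n - X ↔
      ∀ P : K[X], P.Monic → Irreducible P → P ∣ g → P.natDegree ∣ n := by
  classical
  rw [← Nat.card_eq_fintype_card]
  refine ⟨fun h P _ hP hPg ↦ hP.natDegree_dvd_of_dvd_X_pow_card_pow_sub_X (hPg.trans h),
    fun h ↦ hg.dvd_of_forall_mem_primeFactors_dvd fun P hP ↦ ?_⟩
  rw [mem_primeFactors, mem_normalizedFactors_iff' hg.ne_zero] at hP
  obtain ⟨hPirr, hPnorm, hPg⟩ := hP
  have hPmonic : P.Monic := hPnorm ▸ monic_normalize hPirr.ne_zero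
  exact hPirr.natDegree_dvd_iff_dvd_X_pow_card_pow_sub_X.mp (h P hPmonic hPirr hPg)

end FiniteField

theorem korselt_criterion_poly_general (F : Type) [Field F] [Fintype F] (g : F[X])
    (hsf : Squarefree g) :
    (∀ f : F[X], g ∣ f ^ (Fintype.card F ^ g.natDegree) - f) ↔
      ∀ P : F[X], P.Monic → Irreducible P → P ∣ g → P.natDegree ∣ g.natDegree := by
  rw [FiniteField.forall_dvd_pow_card_pow_sub_self_iff, hsf.dvd_X_pow_card_pow_sub_X_iff]

/-- Korselt's criterion for polynomials: a squarefree, non-irreducible, nonconstant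
polynomial `g ∈ F_q[t]` satisfies `f ^ (q ^ deg g) ≡ f (mod g)` for all `f` if and only if
every monic irreducible factor of `g` has degree dividing `deg g`. -/
theorem korselt_criterion_poly (F : Type) [Field F] [Fintype F] (g : F[X])
    (hsf : Squarefree g) (hirr : ¬Irreducible g) (hdeg : 0 < g.natDegree) :
    (∀ f : F[X], g ∣ f ^ (Fintype.card F ^ g.natDegree) - f) ↔
      ∀ P : F[X], P.Monic → Irreducible P → P ∣ g → P.natDegree ∣ g.natDegree :=
  korselt_criterion_poly_general F g hsf
end

section
/- For prime powers q and positive integers m, n with m < n (and if q = 2 or q = 3, additionally m ≥ 2), the number of monic irreducible polynomials of degree m over F_q is strictly less than the number of monic irreducible polynomials of degree n over F_q. -/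
/-!
The monic irreducible factors of the squarefree polynomial `X ^ q ^ n - X` are exactly the monic
irreducibles whose degree divides `n`, which gives Gauss's formula `∑_{d ∣ n} d π_q(d) = q ^ n`.
Hence `π_q(1) = q`, `m π_q(m) + q ≤ q ^ m` for `m ≥ 2` (the linear factors also divide), and
`q ^ n + q ≤ n π_q(n) + 2 q ^ ⌊n/2⌋` since the proper divisors contribute at most
`∑_{d ≤ n/2} q ^ d`. These bounds give `π_q(k) < π_q(k + 1)` for `k ≥ 2`, and for `k = 1` once
`q ≥ 4`; chaining these steps proves the theorem.
-/

open Polynomial UniqueFactorizationMonoid Finset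

theorem Nat.sum_Icc_pow_add_le {q s : ℕ} (hq : 2 ≤ q) (hs : 1 ≤ s) :
    ∑ d ∈ Icc 1 s, q ^ d + q ≤ 2 * q ^ s := by
  induction s, hs using Nat.le_induction with
  | base => simp only [Icc_self, sum_singleton, pow_one]; omega
  | succ s _ ih =>
    rw [sum_Icc_succ_top (by omega), pow_succ]
    nlinarith [Nat.mul_le_mul_left (q ^ s) hq]

/-- `(k + 1) (q ^ k - q) < k (q ^ (k + 1) + q - 2 q ^ ⌊(k + 1) / 2⌋)`, cleared of subtractions. -/
theorem succ_mul_pow_add_lt {q k : ℕ} (hq : 2 ≤ q) (hk : 2 ≤ k) :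
    (k + 1) * q ^ k + 2 * k * q ^ ((k + 1) / 2) < k * q ^ (k + 1) + (2 * k + 1) * q := by
  obtain rfl | rfl | hk4 : k = 2 ∨ k = 3 ∨ 4 ≤ k := by omega
  · norm_num
    nlinarith [Nat.mul_le_mul_left (q * q) hq]
  · norm_num
    nlinarith [Nat.mul_le_mul_left (q * q * q) hq, Nat.mul_le_mul_left (q * q) hq]
  · obtain ⟨j, rfl⟩ : ∃ j, k = j + 2 := ⟨k - 2, by omega⟩
    have hhalf : q ^ ((j + 2 + 1) / 2) ≤ q ^ j := Nat.pow_le_pow_right (by omega) (by omega)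
    have hsq : 4 ≤ q ^ 2 := by nlinarith
    have hcoef : (j + 3) * q ^ 2 + 2 * (j + 2) ≤ (j + 2) * q ^ 3 := by
      nlinarith [Nat.mul_le_mul_left ((j + 2) * q ^ 2) hq, Nat.mul_le_mul_left (j + 1) hsq]
    calc (j + 2 + 1) * q ^ (j + 2) + 2 * (j + 2) * q ^ ((j + 2 + 1) / 2)
        ≤ ((j + 3) * q ^ 2 + 2 * (j + 2)) * q ^ j := by rw [pow_add]; nlinarith
      _ ≤ (j + 2) * q ^ 3 * q ^ j := Nat.mul_le_mul_right _ hcoef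
      _ < (j + 2) * q ^ (j + 2 + 1) + (2 * (j + 2) + 1) * q := by ring_nf; nlinarith

theorem Polynomial.Monic.sum_natDegree_toFinset_normalizedFactors {K : Type*} [Field K]
    [DecidableEq K] {f : K[X]} (hf : f.Monic) (hsq : Squarefree f) :
    ∑ p ∈ (normalizedFactors f).toFinset, p.natDegree = f.natDegree := by
  have hmonic : ∀ p ∈ normalizedFactors f, p.Monic := fun p hp =>
    ((Polynomial.mem_normalizedFactors_iff hf.ne_zero).mp hp).2.1
  rw [Finset.sum_eq_multiset_sum, Multiset.toFinset_val,
    ((squarefree_iff_nodup_normalizedFactors hf.ne_zero).mp hsq).dedup,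
    ← natDegree_multiset_prod_of_monic _ hmonic]
  congr 1
  simpa [hf.leadingCoeff] using leadingCoeff_mul_prod_normalizedFactors f

/-- `π_q(d)` for `q = Nat.card F`. -/
noncomputable def monicIrreducibleCount (F : Type*) [Field F] (d : ℕ) : ℕ :=
  Nat.card {p : F[X] // p.Monic ∧ Irreducible p ∧ p.natDegree = d}

section FiniteField

variable {F : Type*} [Field F] [Finite F]

theorem FiniteField.monic_X_pow_card_pow_sub_X {n : ℕ} (hn : n ≠ 0) :
    (X ^ Nat.card F ^ n - X : F[X]).Monic := by
  apply monic_X_pow_sub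
  rw [degree_X]
  exact_mod_cast Nat.one_lt_pow hn Finite.one_lt_card

theorem FiniteField.squarefree_X_pow_card_pow_sub_X {n : ℕ} (hn : n ≠ 0) :
    Squarefree (X ^ Nat.card F ^ n - X : F[X]) := by
  have := Fintype.ofFinite F
  have hchar : ringChar F ∣ Nat.card F := by
    rw [← CharP.cast_eq_zero_iff F, Nat.card_eq_fintype_card, FiniteField.cast_card_eq_zero]
  exact (galois_poly_separable (ringChar F) _ (dvd_pow hchar hn)).squarefree

theorem FiniteField.mem_normalizedFactors_X_pow_card_pow_sub_X [DecidableEq F] {n : ℕ}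
    (hn : n ≠ 0) {p : F[X]} :
    p ∈ normalizedFactors (X ^ Nat.card F ^ n - X : F[X]) ↔
      p.Monic ∧ Irreducible p ∧ p.natDegree ∣ n := by
  rw [Polynomial.mem_normalizedFactors_iff (monic_X_pow_card_pow_sub_X hn).ne_zero]
  constructor
  · rintro ⟨hirr, hmonic, hdvd⟩
    exact ⟨hmonic, hirr, hirr.natDegree_dvd_of_dvd_X_pow_card_pow_sub_X hdvd⟩
  · rintro ⟨hmonic, hirr, hdvd⟩
    exact ⟨hirr, hmonic, hirr.natDegree_dvd_iff_dvd_X_pow_card_pow_sub_X.mp hdvd⟩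

theorem sum_divisors_mul_monicIrreducibleCount {n : ℕ} (hn : n ≠ 0) :
    ∑ d ∈ n.divisors, d * monicIrreducibleCount F d = Nat.card F ^ n := by
  classical
  set f : F[X] := X ^ Nat.card F ^ n - X
  set T := (normalizedFactors f).toFinset
  have hcount : ∀ d ∈ n.divisors, monicIrreducibleCount F d = #{p ∈ T | p.natDegree = d} := by
    intro d hd
    rw [monicIrreducibleCount, ← Nat.card_eq_finsetCard]
    refine Nat.card_congr (Equiv.subtypeEquivRight fun p => ?_)
    simp only [T, f, mem_filter, Multiset.mem_toFinset,
      FiniteField.mem_normalizedFactors_X_pow_card_pow_sub_X hn]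
    constructor
    · rintro ⟨hmonic, hirr, rfl⟩
      exact ⟨⟨hmonic, hirr, Nat.dvd_of_mem_divisors hd⟩, rfl⟩
    · rintro ⟨⟨hmonic, hirr, -⟩, rfl⟩
      exact ⟨hmonic, hirr, rfl⟩
  have hmaps : ∀ p ∈ T, p.natDegree ∈ n.divisors := fun p hp => by
    rw [Multiset.mem_toFinset, FiniteField.mem_normalizedFactors_X_pow_card_pow_sub_X hn] at hp
    exact Nat.mem_divisors.mpr ⟨hp.2.2, hn⟩
  calc ∑ d ∈ n.divisors, d * monicIrreducibleCount F d
      = ∑ d ∈ n.divisors, ∑ p ∈ T with p.natDegree = d, p.natDegree := by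
        refine sum_congr rfl fun d hd => ?_
        rw [hcount d hd, sum_congr rfl fun p hp => (mem_filter.mp hp).2, sum_const, smul_eq_mul,
          mul_comm]
    _ = ∑ p ∈ T, p.natDegree := sum_fiberwise_of_maps_to hmaps _
    _ = f.natDegree :=
        (FiniteField.monic_X_pow_card_pow_sub_X hn).sum_natDegree_toFinset_normalizedFactors
          (FiniteField.squarefree_X_pow_card_pow_sub_X hn)
    _ = Nat.card F ^ n := FiniteField.X_pow_card_pow_sub_X_natDegree_eq F hn Finite.one_lt_card

theorem monicIrreducibleCount_one : monicIrreducibleCount F 1 = Nat.card F := by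
  simpa using sum_divisors_mul_monicIrreducibleCount (F := F) one_ne_zero

theorem mul_monicIrreducibleCount_le {n : ℕ} (hn : n ≠ 0) :
    n * monicIrreducibleCount F n ≤ Nat.card F ^ n := by
  rw [← sum_divisors_mul_monicIrreducibleCount hn]
  exact single_le_sum (f := fun d => d * monicIrreducibleCount F d) (fun _ _ => Nat.zero_le _)
    (Nat.mem_divisors_self n hn)

theorem mul_monicIrreducibleCount_add_card_le {n : ℕ} (hn : 2 ≤ n) :
    n * monicIrreducibleCount F n + Nat.card F ≤ Nat.card F ^ n := by
  have hsub : ({n, 1} : Finset ℕ) ⊆ n.divisors := by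
    simp [insert_subset_iff, show n ≠ 0 by omega]
  have := sum_le_sum_of_subset (f := fun d => d * monicIrreducibleCount F d) hsub
  rwa [sum_pair (by omega), sum_divisors_mul_monicIrreducibleCount (by omega), one_mul,
    monicIrreducibleCount_one] at this

theorem pow_le_mul_monicIrreducibleCount_add_sum {n : ℕ} (hn : n ≠ 0) :
    Nat.card F ^ n ≤ n * monicIrreducibleCount F n + ∑ d ∈ Icc 1 (n / 2), Nat.card F ^ d := by
  rw [← sum_divisors_mul_monicIrreducibleCount hn, ← Nat.cons_self_properDivisors hn, sum_cons]
  gcongr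
  have hsub : n.properDivisors ⊆ Icc 1 (n / 2) := fun d hd => by
    obtain ⟨⟨e, rfl⟩, hlt⟩ := Nat.mem_properDivisors.mp hd
    have he : 2 ≤ e := by
      rcases e with _ | _ | e <;> simp_all
    rw [mem_Icc, Nat.le_div_iff_mul_le two_pos]
    exact ⟨Nat.pos_of_mem_properDivisors hd, Nat.mul_le_mul_left d he⟩
  calc ∑ d ∈ n.properDivisors, d * monicIrreducibleCount F d
      ≤ ∑ d ∈ n.properDivisors, Nat.card F ^ d :=
        sum_le_sum fun d hd => mul_monicIrreducibleCount_le (Nat.pos_of_mem_properDivisors hd).ne'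
    _ ≤ ∑ d ∈ Icc 1 (n / 2), Nat.card F ^ d := sum_le_sum_of_subset hsub

theorem pow_add_card_le_mul_monicIrreducibleCount_add {n : ℕ} (hn : 2 ≤ n) :
    Nat.card F ^ n + Nat.card F ≤ n * monicIrreducibleCount F n + 2 * Nat.card F ^ (n / 2) := by
  have hlow := pow_le_mul_monicIrreducibleCount_add_sum (F := F) (n := n) (by omega)
  have hgeom := Nat.sum_Icc_pow_add_le (Finite.one_lt_card (α := F)) (s := n / 2) (by omega)
  omega

theorem monicIrreducibleCount_lt_succ {k : ℕ} (hk : 2 ≤ k) :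
    monicIrreducibleCount F k < monicIrreducibleCount F (k + 1) := by
  have hup := mul_monicIrreducibleCount_add_card_le (F := F) hk
  have hlow := pow_add_card_le_mul_monicIrreducibleCount_add (F := F) (n := k + 1) (by omega)
  have harith := succ_mul_pow_add_lt (Finite.one_lt_card (α := F)) hk
  by_contra! hle
  nlinarith [Nat.mul_le_mul_left k hlow, Nat.mul_le_mul_left (k * (k + 1)) hle,
    Nat.mul_le_mul_left (k + 1) hup]

theorem monicIrreducibleCount_one_lt_two (hq : 4 ≤ Nat.card F) :
    monicIrreducibleCount F 1 < monicIrreducibleCount F 2 := by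
  have hlow := pow_add_card_le_mul_monicIrreducibleCount_add (F := F) le_rfl
  rw [Nat.div_self two_pos, pow_one] at hlow
  rw [monicIrreducibleCount_one]
  nlinarith

end FiniteField

/-- Monotonicity of the count of monic irreducible polynomials: for a finite field `F` of
cardinality `q` and `m < n` (with additionally `2 ≤ m` if `q = 2` or `q = 3`), the number of
monic irreducible polynomials of degree `m` over `F` is strictly less than the number of
monic irreducible polynomials of degree `n`. -/
theorem count_monic_irreducible_strict_mono (F : Type) [Field F] [Fintype F] (m n : ℕ)
    (hm : 1 ≤ m) (hmn : m < n)
    (hsmall : Fintype.card F = 2 ∨ Fintype.card F = 3 → 2 ≤ m) :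
    Nat.card {p : F[X] // p.Monic ∧ Irreducible p ∧ p.natDegree = m} <
      Nat.card {p : F[X] // p.Monic ∧ Irreducible p ∧ p.natDegree = n} := by
  have hq : 2 ≤ Fintype.card F := Fintype.one_lt_card
  have hstep : ∀ k, m ≤ k → monicIrreducibleCount F k < monicIrreducibleCount F (k + 1) := by
    intro k hk
    obtain rfl | hk2 : k = 1 ∨ 2 ≤ k := by omega
    · exact monicIrreducibleCount_one_lt_two (by rw [Nat.card_eq_fintype_card]; omega)
    · exact monicIrreducibleCount_lt_succ hk2
  exact Nat.rel_of_forall_rel_succ_of_le_of_lt (· < ·) hstep le_rfl hmn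
end

section
/- If n is a prime number with n ≤ q, then the number of monic Carmichael polynomials of degree n in F_q[t] equals the binomial coefficient C(q, n); if n is prime with n > q, there are no Carmichael polynomials of degree n. -/
/-!
A Carmichael polynomial of prime degree `n` can only have irreducible factors of degree `1` or
`n`, and a factor of degree `n` would make it irreducible. So it splits, and being squarefree it
is `∏ a ∈ s, (t - a)` for a set `s` of `n` distinct elements of `F_q`; conversely every such
product is Carmichael. Monic Carmichael polynomials of degree `n` thus correspond to the
`n`-element subsets of `F_q`, which exist only when `n ≤ q`.
-/

open Polynomial

/-- `g` is a Carmichael polynomial: squarefree, not irreducible (composite), nonconstant,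
and every monic irreducible factor has degree dividing `deg g`. -/
def IsCarmichaelPoly {F : Type} [Field F] (g : F[X]) : Prop :=
  Squarefree g ∧ ¬Irreducible g ∧ 0 < g.natDegree ∧
    ∀ P : F[X], P.Monic → Irreducible P → P ∣ g → P.natDegree ∣ g.natDegree

namespace Polynomial

section Domain

variable {R : Type*} [CommRing R] [IsDomain R]

theorem Squarefree.nodup_roots {f : R[X]} (hf : Squarefree f) : f.roots.Nodup := by
  classical
  refine Multiset.nodup_iff_count_le_one.mpr fun a => ?_
  rw [count_roots]
  have := (hf.squarefree_of_dvd (pow_rootMultiplicity_dvd f a)).eq_zero_or_one_of_pow_of_not_isUnit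
    (not_isUnit_X_sub_C a)
  omega

theorem exists_finset_prod_X_sub_C_eq {f : R[X]} (hm : f.Monic) (hsq : Squarefree f)
    (hs : f.Splits) : ∃ s : Finset R, ∏ a ∈ s, (X - C a) = f :=
  ⟨⟨f.roots, hsq.nodup_roots⟩, (hs.eq_prod_roots_of_monic hm).symm⟩

theorem prod_X_sub_C_injective : Function.Injective fun s : Finset R => ∏ a ∈ s, (X - C a) :=
  fun s t hst => Finset.val_injective <| by
    simpa only [roots_prod_X_sub_C] using congrArg roots hst

end Domain

theorem splits_of_forall_monic_irreducible_dvd {K : Type*} [Field K] {f : K[X]}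
    (h : ∀ g : K[X], g.Monic → Irreducible g → g ∣ f → g.natDegree = 1) : f.Splits := by
  classical
  by_cases hf : f = 0
  · simp [hf]
  rw [← leadingCoeff_mul_prod_normalizedFactors f]
  refine (Splits.C _).mul (Splits.multisetProd fun g hg => ?_)
  obtain ⟨hirr, hmon, hdvd⟩ := (Polynomial.mem_normalizedFactors_iff hf).mp hg
  exact Splits.of_natDegree_eq_one (h g hmon hirr hdvd)

end Polynomial

section Carmichael

variable {K : Type} [Field K] {g : K[X]}

theorem isCarmichaelPoly_of_squarefree_of_splits (hsq : Squarefree g) (hs : g.Splits)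
    (hdeg : 2 ≤ g.natDegree) : IsCarmichaelPoly g := by
  have hg0 : g ≠ 0 := by rintro rfl; simp at hdeg
  refine ⟨hsq, fun hirr => ?_, by omega, fun P _ hP hPg => ?_⟩
  · have := hs.natDegree_eq_one_of_irreducible hirr
    omega
  · rw [(hs.of_dvd hg0 hPg).natDegree_eq_one_of_irreducible hP]
    exact one_dvd _

theorem IsCarmichaelPoly.natDegree_eq_one_of_dvd (hg : IsCarmichaelPoly g)
    (hn : g.natDegree.Prime) {P : K[X]} (hPm : P.Monic) (hP : Irreducible P) (hPg : P ∣ g) :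
    P.natDegree = 1 := by
  obtain ⟨-, hred, hpos, hdvd⟩ := hg
  refine (hn.eq_one_or_self_of_dvd _ (hdvd P hPm hP hPg)).resolve_right fun hPn => hred ?_
  exact (associated_of_dvd_of_natDegree_le hPg (by rintro rfl; simp at hpos) hPn.ge).irreducible hP

theorem IsCarmichaelPoly.splits (hg : IsCarmichaelPoly g) (hn : g.natDegree.Prime) :
    g.Splits :=
  splits_of_forall_monic_irreducible_dvd fun _ => hg.natDegree_eq_one_of_dvd hn

theorem isCarmichaelPoly_iff_of_natDegree_prime (hn : g.natDegree.Prime) :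
    IsCarmichaelPoly g ↔ Squarefree g ∧ g.Splits :=
  ⟨fun hg => ⟨hg.1, hg.splits hn⟩, fun ⟨hsq, hs⟩ =>
    isCarmichaelPoly_of_squarefree_of_splits hsq hs hn.two_le⟩

theorem monic_isCarmichaelPoly_natDegree_eq_iff {n : ℕ} (hn : n.Prime) :
    g.Monic ∧ IsCarmichaelPoly g ∧ g.natDegree = n ↔
      ∃ s : Finset K, s.card = n ∧ ∏ a ∈ s, (X - C a) = g := by
  constructor
  · rintro ⟨hm, hg, rfl⟩
    obtain ⟨s, rfl⟩ := exists_finset_prod_X_sub_C_eq hm hg.1 (hg.splits hn)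
    exact ⟨s, by simp, rfl⟩
  · rintro ⟨s, rfl, rfl⟩
    have hdeg : (∏ a ∈ s, (X - C a)).natDegree = s.card := by simp
    refine ⟨monic_prod_of_monic _ _ fun a _ => monic_X_sub_C a, ?_, hdeg⟩
    rw [isCarmichaelPoly_iff_of_natDegree_prime (hdeg ▸ hn)]
    exact ⟨(separable_prod_X_sub_C_iff'.mpr fun _ _ _ _ => id).squarefree,
      Splits.prod fun a _ => Splits.X_sub_C a⟩

theorem IsCarmichaelPoly.natDegree_le_card [Fintype K] (hg : IsCarmichaelPoly g)
    (hn : g.natDegree.Prime) : g.natDegree ≤ Fintype.card K := by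
  rw [← splits_iff_card_roots.mp (hg.splits hn)]
  exact Finset.card_le_univ ⟨g.roots, hg.1.nodup_roots⟩

end Carmichael

/-- For a prime `n ≤ q`, the number of monic Carmichael polynomials of degree `n` in `F_q[t]`
is `C(q, n)`; for a prime `n > q` there are no Carmichael polynomials of degree `n`. -/
theorem carmichael_poly_prime_degree_count (F : Type) [Field F] [Fintype F] (n : ℕ)
    (hn : n.Prime) :
    (n ≤ Fintype.card F →
      Nat.card {g : F[X] // g.Monic ∧ IsCarmichaelPoly g ∧ g.natDegree = n} =
        (Fintype.card F).choose n) ∧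
    (Fintype.card F < n → ∀ g : F[X], ¬(IsCarmichaelPoly g ∧ g.natDegree = n)) := by
  refine ⟨fun _ => ?_, fun hlt g ⟨hg, hdeg⟩ => ?_⟩
  · let prodOf (s : {s : Finset F // s.card = n}) : F[X] := ∏ a ∈ s.1, (X - C a)
    have hrange : {g : F[X] | g.Monic ∧ IsCarmichaelPoly g ∧ g.natDegree = n} =
        Set.range prodOf := by
      ext g
      simp [prodOf, monic_isCarmichaelPoly_natDegree_eq_iff hn]
    have hinj : Function.Injective prodOf :=
      prod_X_sub_C_injective.comp Subtype.val_injective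
    change Nat.card {g : F[X] | g.Monic ∧ IsCarmichaelPoly g ∧ g.natDegree = n} = _
    rw [hrange, Nat.card_range_of_injective hinj, Nat.card_eq_fintype_card,
      Fintype.card_finset_len]
  · have := hg.natDegree_le_card (hdeg ▸ hn)
    omega
end

section
/- If the number of monic irreducible polynomials of degree n/ℓ in F_q[t] exceeds ℓ, where ℓ is the smallest prime factor of a composite n, then there exist at least two monic Carmichael polynomials of degree n in F_q[t], obtained as products of ℓ distinct monic irreducibles of degree n/ℓ. -/
/-!
Fix `ℓ + 1` distinct monic irreducibles of degree `n / ℓ` and leave out one of them at a time.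
By unique factorization the two resulting products differ. Each is squarefree of degree
`ℓ * (n / ℓ) = n`, is reducible because `ℓ ≥ 2`, and its monic irreducible factors are among
the chosen ones, so their degree `n / ℓ` divides `n`.
-/

open Polynomial

theorem Finset.exists_ne_subsets_card_eq {α : Type*} {T : Finset α} {ℓ : ℕ} (hℓ : 0 < ℓ)
    (hT : ℓ < T.card) : ∃ s₁ ⊆ T, ∃ s₂ ⊆ T, s₁ ≠ s₂ ∧ s₁.card = ℓ ∧ s₂.card = ℓ := by
  classical
  obtain ⟨U, hUT, hU⟩ := Finset.exists_subset_card_eq hT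
  obtain ⟨a, ha, b, hb, hab⟩ := Finset.one_lt_card.mp (hU ▸ Nat.succ_lt_succ hℓ)
  refine ⟨U.erase a, (U.erase_subset a).trans hUT, U.erase b, (U.erase_subset b).trans hUT,
    fun h => ?_, by simp [Finset.card_erase_of_mem ha, hU],
    by simp [Finset.card_erase_of_mem hb, hU]⟩
  have ha_erase_b : a ∈ U.erase b := Finset.mem_erase.mpr ⟨hab, ha⟩
  exact Finset.notMem_erase a U (h ▸ ha_erase_b)

theorem Set.exists_ne_finsets_card_eq {α : Type*} {S : Set α} {ℓ : ℕ} (hℓ : 0 < ℓ)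
    (hS : ℓ < Nat.card S) :
    ∃ s₁ s₂ : Finset α, s₁ ≠ s₂ ∧ ↑s₁ ⊆ S ∧ ↑s₂ ⊆ S ∧ s₁.card = ℓ ∧ s₂.card = ℓ := by
  have hfin : S.Finite := Set.finite_coe_iff.mp (Nat.finite_of_card_ne_zero (by omega))
  rw [Nat.card_eq_card_finite_toFinset hfin] at hS
  obtain ⟨s₁, h₁, s₂, h₂, hne, hc₁, hc₂⟩ := Finset.exists_ne_subsets_card_eq hℓ hS
  exact ⟨s₁, s₂, hne, by simpa using h₁, by simpa using h₂, hc₁, hc₂⟩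

theorem Finset.not_irreducible_prod {ι M : Type*} [CommMonoid M] {s : Finset ι} {f : ι → M}
    (hs : 1 < s.card) (hf : ∀ i ∈ s, ¬IsUnit (f i)) : ¬Irreducible (∏ i ∈ s, f i) := by
  classical
  obtain ⟨a, ha, b, hb, hab⟩ := Finset.one_lt_card.mp hs
  rw [← Finset.mul_prod_erase s f ha]
  intro h
  rcases h.isUnit_or_isUnit rfl with h | h
  · exact hf a ha h
  · exact hf b hb (isUnit_of_dvd_unit
      (Finset.dvd_prod_of_mem f (Finset.mem_erase.mpr ⟨hab.symm, hb⟩)) h)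

namespace Polynomial

variable {K : Type*} [Field K]

theorem Monic.eq_of_irreducible_of_dvd {p q : K[X]} (hp : p.Monic) (hq : q.Monic)
    (hpi : Irreducible p) (hqi : Irreducible q) (h : p ∣ q) : p = q :=
  eq_of_monic_of_associated hp hq (hpi.associated_of_dvd hqi h)

variable {s : Finset K[X]}

theorem mem_of_dvd_prod_of_monic_irreducible (hs : ∀ q ∈ s, q.Monic ∧ Irreducible q)
    {p : K[X]} (hp : p.Monic) (hpi : Irreducible p) (h : p ∣ ∏ q ∈ s, q) : p ∈ s := by
  obtain ⟨q, hq, hpq⟩ := hpi.prime.exists_mem_finset_dvd h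
  rwa [hp.eq_of_irreducible_of_dvd (hs q hq).1 hpi (hs q hq).2 hpq]

theorem eq_of_prod_eq_prod_of_monic_irreducible {t : Finset K[X]}
    (hs : ∀ q ∈ s, q.Monic ∧ Irreducible q) (ht : ∀ q ∈ t, q.Monic ∧ Irreducible q)
    (h : ∏ q ∈ s, q = ∏ q ∈ t, q) : s = t := by
  ext p
  constructor
  · intro hp
    exact mem_of_dvd_prod_of_monic_irreducible ht (hs p hp).1 (hs p hp).2
      (h ▸ Finset.dvd_prod_of_mem _ hp)
  · intro hp
    exact mem_of_dvd_prod_of_monic_irreducible hs (ht p hp).1 (ht p hp).2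
      (h.symm ▸ Finset.dvd_prod_of_mem _ hp)

theorem squarefree_prod_of_monic_irreducible (hs : ∀ q ∈ s, q.Monic ∧ Irreducible q) :
    Squarefree (∏ q ∈ s, q) := by
  refine Finset.squarefree_prod_of_pairwise_isCoprime (fun p hp q hq hpq => ?_)
    fun q hq => (hs q hq).2.squarefree
  refine ((hs p hp).2.isRelPrime_iff_not_dvd).mpr fun h => hpq ?_
  exact (hs p hp).1.eq_of_irreducible_of_dvd (hs q hq).1 (hs p hp).2 (hs q hq).2 h

theorem natDegree_prod_of_natDegree_eq {d : ℕ} (hs : ∀ q ∈ s, q.Monic ∧ q.natDegree = d) :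
    (∏ q ∈ s, q).natDegree = s.card * d := by
  rw [natDegree_prod_of_monic s (fun q => q) fun q hq => (hs q hq).1,
    Finset.sum_congr rfl fun q hq => (hs q hq).2, Finset.sum_const, smul_eq_mul]

end Polynomial

theorem isCarmichaelPoly_prod {F : Type} [Field F] {s : Finset F[X]} {d : ℕ}
    (hs : ∀ q ∈ s, q.Monic ∧ Irreducible q ∧ q.natDegree = d) (hcard : 1 < s.card) :
    IsCarmichaelPoly (∏ q ∈ s, q) := by
  have hmi : ∀ q ∈ s, q.Monic ∧ Irreducible q := fun q hq => ⟨(hs q hq).1, (hs q hq).2.1⟩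
  have hdeg := natDegree_prod_of_natDegree_eq fun q hq => ⟨(hs q hq).1, (hs q hq).2.2⟩
  obtain ⟨q, hq⟩ := Finset.card_pos.mp (by omega : 0 < s.card)
  have hd : 0 < d := (hs q hq).2.2 ▸ (hs q hq).2.1.natDegree_pos
  refine ⟨squarefree_prod_of_monic_irreducible hmi,
    Finset.not_irreducible_prod hcard fun q hq => (hs q hq).2.1.not_isUnit,
    hdeg ▸ Nat.mul_pos (by omega) hd, fun P hP hPi hPdvd => ?_⟩
  rw [hdeg, (hs P (mem_of_dvd_prod_of_monic_irreducible hmi hP hPi hPdvd)).2.2]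
  exact dvd_mul_left _ _

theorem carmichael_poly_exists_two_general (F : Type) [Field F] (n : ℕ)
    (hn : 1 < n)
    (hπ : n.minFac <
      Nat.card {p : F[X] // p.Monic ∧ Irreducible p ∧ p.natDegree = n / n.minFac}) :
    ∃ g₁ g₂ : F[X], g₁ ≠ g₂ ∧
      ∀ g ∈ [g₁, g₂], g.Monic ∧ IsCarmichaelPoly g ∧ g.natDegree = n ∧
        ∃ s : Finset F[X], s.card = n.minFac ∧
          (∀ p ∈ s, p.Monic ∧ Irreducible p ∧ p.natDegree = n / n.minFac) ∧
          g = s.prod id := by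
  set S : Set F[X] := {p | p.Monic ∧ Irreducible p ∧ p.natDegree = n / n.minFac}
  have hℓ : 1 < n.minFac := (Nat.minFac_prime hn.ne').one_lt
  have key : ∀ s : Finset F[X], ↑s ⊆ S → s.card = n.minFac →
      (s.prod id).Monic ∧ IsCarmichaelPoly (s.prod id) ∧ (s.prod id).natDegree = n ∧
        ∃ t : Finset F[X], t.card = n.minFac ∧
          (∀ p ∈ t, p.Monic ∧ Irreducible p ∧ p.natDegree = n / n.minFac) ∧
          s.prod id = t.prod id := by
    intro s hs hcard
    refine ⟨monic_prod_of_monic _ _ fun q hq => (hs hq).1, isCarmichaelPoly_prod hs (hcard ▸ hℓ),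
      ?_, s, hcard, hs, rfl⟩
    have hdeg := natDegree_prod_of_natDegree_eq (s := s) fun q hq => ⟨(hs hq).1, (hs hq).2.2⟩
    rwa [hcard, Nat.mul_div_cancel' n.minFac_dvd] at hdeg
  obtain ⟨s₁, s₂, hne, h₁, h₂, hc₁, hc₂⟩ := Set.exists_ne_finsets_card_eq (S := S) (by omega) hπ
  refine ⟨s₁.prod id, s₂.prod id, fun h => hne (eq_of_prod_eq_prod_of_monic_irreducible
    (fun q hq => ⟨(h₁ hq).1, (h₁ hq).2.1⟩) (fun q hq => ⟨(h₂ hq).1, (h₂ hq).2.1⟩) h), ?_⟩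
  simp only [List.mem_cons, List.not_mem_nil, or_false]
  rintro g (rfl | rfl)
  exacts [key s₁ h₁ hc₁, key s₂ h₂ hc₂]

/-- If the number of monic irreducible polynomials of degree `n/ℓ` exceeds `ℓ`, where `ℓ` is
the smallest prime factor of the composite number `n`, then there exist at least two distinct
monic Carmichael polynomials of degree `n`, each a product of `ℓ` distinct monic irreducibles
of degree `n/ℓ`. -/
theorem carmichael_poly_exists_two (F : Type) [Field F] [Fintype F] (n : ℕ)
    (hn : 1 < n) (hcomp : ¬n.Prime)
    (hπ : n.minFac <
      Nat.card {p : F[X] // p.Monic ∧ Irreducible p ∧ p.natDegree = n / n.minFac}) :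
    ∃ g₁ g₂ : F[X], g₁ ≠ g₂ ∧
      ∀ g ∈ [g₁, g₂], g.Monic ∧ IsCarmichaelPoly g ∧ g.natDegree = n ∧
        ∃ s : Finset F[X], s.card = n.minFac ∧
          (∀ p ∈ s, p.Monic ∧ Irreducible p ∧ p.natDegree = n / n.minFac) ∧
          g = s.prod id :=
  carmichael_poly_exists_two_general F n hn hπ
end

section
/- The natural density of Carmichael polynomials in F_q[t] is zero: lim_{n→∞} (C_q(1) + C_q(2) + ... + C_q(n))/q^n = 0, where C_q(m) is the number of monic Carmichael polynomials of degree m. -/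
/-!
Fix `s ≈ m ^ (1/4)`. A monic Carmichael polynomial `g` of degree `m` either has a monic
irreducible factor `P` of degree `d ∣ m` with `d > m / s`, or, being squarefree, has at least `s`
distinct monic irreducible factors of degree `≤ m / s`. There are at most `s` such divisors `d`,
and since `d · π_q(d) ≤ q ^ d` the first kind contributes at most `q ^ (m + 1) s² / m`. For the
second kind, summing `q ^ (m + 1 - deg (P₁ ⋯ P_s))` over `s`-sets of factors gives at most
`q ^ (m + 1) (∑_P q ^ (-deg P)) ^ s / s!`, and `∑_P q ^ (-deg P) ≤ H_{m/s} ≤ 1 + log m`, so this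
is at most `q ^ (m + 1) (e (1 + log m) / s) ^ s`. Hence `C_q(m) = o(q ^ m)`, and then the partial
sums are `o(q ^ n)` as well.
-/

open Polynomial

open Finset Filter Topology Asymptotics UniqueFactorizationMonoid
open scoped Nat

section PowersetCard

variable {ι R : Type*} [DecidableEq ι] [CommSemiring R]

theorem succ_mul_sum_powersetCard_succ_prod (s : Finset ι) (w : ι → R) (k : ℕ) :
    ((k + 1 : ℕ) : R) * ∑ S ∈ s.powersetCard (k + 1), ∏ a ∈ S, w a
      = ∑ T ∈ s.powersetCard k, ∑ a ∈ s \ T, w a * ∏ x ∈ T, w x := by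
  rw [mul_sum]
  have hcard : ∀ S ∈ s.powersetCard (k + 1),
      ((k + 1 : ℕ) : R) * ∏ a ∈ S, w a = ∑ _a ∈ S, ∏ x ∈ S, w x := by
    intro S hS
    rw [sum_const, (mem_powersetCard.1 hS).2, nsmul_eq_mul]
  rw [sum_congr rfl hcard, sum_sigma', sum_sigma']
  refine sum_nbij' (fun p => ⟨p.1.erase p.2, p.2⟩) (fun p => ⟨insert p.2 p.1, p.2⟩)
    ?_ ?_ ?_ ?_ ?_
  · rintro ⟨S, a⟩ hp
    simp only [mem_sigma, mem_powersetCard] at hp ⊢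
    refine ⟨⟨(erase_subset _ _).trans hp.1.1, ?_⟩,
      Finset.mem_sdiff.2 ⟨hp.1.1 hp.2, notMem_erase _ _⟩⟩
    rw [card_erase_of_mem hp.2, hp.1.2, Nat.add_sub_cancel]
  · rintro ⟨T, a⟩ hp
    simp only [mem_sigma, mem_powersetCard, Finset.mem_sdiff] at hp ⊢
    exact ⟨⟨insert_subset hp.2.1 hp.1.1, by rw [card_insert_of_notMem hp.2.2, hp.1.2]⟩,
      mem_insert_self _ _⟩
  · rintro ⟨S, a⟩ hp
    rw [mem_sigma] at hp
    simp only [insert_erase hp.2]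
  · rintro ⟨T, a⟩ hp
    rw [mem_sigma, Finset.mem_sdiff] at hp
    simp only [erase_insert hp.2.2]
  · rintro ⟨S, a⟩ hp
    exact (mul_prod_erase S w (mem_sigma.1 hp).2).symm

variable [PartialOrder R] [IsOrderedRing R]

theorem factorial_mul_sum_powersetCard_prod_le_sum_pow (s : Finset ι) {w : ι → R}
    (hw : ∀ a ∈ s, 0 ≤ w a) (k : ℕ) :
    (k ! : R) * ∑ S ∈ s.powersetCard k, ∏ a ∈ S, w a ≤ (∑ a ∈ s, w a) ^ k := by
  induction k with
  | zero => simp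
  | succ k ih =>
    have hprod : ∀ T ∈ s.powersetCard k, 0 ≤ ∏ x ∈ T, w x := fun T hT =>
      prod_nonneg fun x hx => hw x ((mem_powersetCard.1 hT).1 hx)
    have step : ((k + 1 : ℕ) : R) * ∑ S ∈ s.powersetCard (k + 1), ∏ a ∈ S, w a
        ≤ (∑ a ∈ s, w a) * ∑ T ∈ s.powersetCard k, ∏ a ∈ T, w a := by
      rw [succ_mul_sum_powersetCard_succ_prod, mul_sum]
      refine sum_le_sum fun T hT => ?_
      rw [sum_mul]
      exact sum_le_sum_of_subset_of_nonneg sdiff_subset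
        fun a ha _ => mul_nonneg (hw a ha) (hprod T hT)
    calc ((k + 1) ! : R) * ∑ S ∈ s.powersetCard (k + 1), ∏ a ∈ S, w a
        = (k ! : R) *
            (((k + 1 : ℕ) : R) * ∑ S ∈ s.powersetCard (k + 1), ∏ a ∈ S, w a) := by
          rw [Nat.factorial_succ, Nat.cast_mul]; ring
      _ ≤ (k ! : R) * ((∑ a ∈ s, w a) * ∑ T ∈ s.powersetCard k, ∏ a ∈ T, w a) := by
          gcongr
      _ = (∑ a ∈ s, w a) * ((k ! : R) * ∑ T ∈ s.powersetCard k, ∏ a ∈ T, w a) := by ring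
      _ ≤ (∑ a ∈ s, w a) * (∑ a ∈ s, w a) ^ k := by gcongr; exact sum_nonneg hw
      _ = (∑ a ∈ s, w a) ^ (k + 1) := by ring

end PowersetCard

theorem tendsto_pow_self_of_tendsto_zero {b : ℕ → ℝ} (hb0 : ∀ t, 0 ≤ b t)
    (hb : Tendsto b atTop (𝓝 0)) : Tendsto (fun t => b t ^ t) atTop (𝓝 0) := by
  refine squeeze_zero' (Eventually.of_forall fun t => pow_nonneg (hb0 t) t)
    (g := fun t => (1 / 2 : ℝ) ^ t) ?_
    (tendsto_pow_atTop_nhds_zero_of_lt_one (by norm_num) (by norm_num))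
  filter_upwards [hb.eventually (ge_mem_nhds (by norm_num : (0 : ℝ) < 1 / 2))] with t ht
  exact pow_le_pow_left₀ (hb0 t) ht t

theorem tendsto_sum_range_succ_div_pow {c : ℕ → ℝ} {q : ℝ} (hq : 1 < q)
    (hc : Tendsto (fun m => c m / q ^ m) atTop (𝓝 0)) :
    Tendsto (fun n => (∑ m ∈ range (n + 1), c m) / q ^ n) atTop (𝓝 0) := by
  have hq0 : 0 < q := by linarith
  have hlittle : c =o[atTop] (q ^ ·) :=
    (isLittleO_iff_tendsto fun m h => absurd h (pow_pos hq0 m).ne').2 hc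
  have hgeom : Tendsto (fun n => ∑ m ∈ range n, q ^ m) atTop atTop :=
    tendsto_atTop_mono
      (fun n => by simpa using sum_le_sum fun m (_ : m ∈ range n) => one_le_pow₀ hq.le)
      tendsto_natCast_atTop_atTop
  have hsum := (hlittle.sum_range (fun m => (pow_pos hq0 m).le) hgeom).comp_tendsto
    (tendsto_add_atTop_nat 1)
  have hbig : (fun n => ∑ m ∈ range (n + 1), q ^ m) =O[atTop] (q ^ ·) := by
    refine IsBigO.of_bound (q / (q - 1)) (Eventually.of_forall fun n => ?_)
    rw [Real.norm_of_nonneg (sum_nonneg fun m _ => (pow_pos hq0 m).le),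
      Real.norm_of_nonneg (pow_pos hq0 n).le, geom_sum_eq hq.ne', div_mul_eq_mul_div,
      div_le_div_iff_of_pos_right (by linarith), pow_succ']
    linarith
  exact (hsum.trans_isBigO hbig).tendsto_div_nhds_zero

theorem pow_div_factorial_le_exp_one_mul_div_pow {x : ℝ} (hx : 0 ≤ x) (n : ℕ) :
    x ^ n / n ! ≤ (Real.exp 1 * x / n) ^ n := by
  rcases n.eq_zero_or_pos with rfl | hn
  · simp
  have hself : (n : ℝ) ^ n / n ! ≤ Real.exp n := Real.pow_div_factorial_le_exp _ n.cast_nonneg n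
  have hn' : (0 : ℝ) < n := by exact_mod_cast hn
  calc x ^ n / n ! = (x / n) ^ n * ((n : ℝ) ^ n / n !) := by
        rw [div_pow]; field_simp
    _ ≤ (x / n) ^ n * Real.exp n := by gcongr
    _ = (Real.exp 1 * x / n) ^ n := by
        rw [← Real.exp_one_pow]; ring

theorem sqrt_sqrt_pow_four_le (m : ℕ) : Nat.sqrt (Nat.sqrt m) ^ 4 ≤ m :=
  calc Nat.sqrt (Nat.sqrt m) ^ 4 = (Nat.sqrt (Nat.sqrt m) ^ 2) ^ 2 := by ring
    _ ≤ Nat.sqrt m ^ 2 := Nat.pow_le_pow_left (Nat.sqrt_le' _) 2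
    _ ≤ m := Nat.sqrt_le' m

theorem lt_sqrt_sqrt_add_one_pow_four (m : ℕ) : m < (Nat.sqrt (Nat.sqrt m) + 1) ^ 4 :=
  calc m < (Nat.sqrt m + 1) ^ 2 := Nat.lt_succ_sqrt' m
    _ ≤ ((Nat.sqrt (Nat.sqrt m) + 1) ^ 2) ^ 2 :=
        Nat.pow_le_pow_left (Nat.lt_succ_sqrt' _) 2
    _ = (Nat.sqrt (Nat.sqrt m) + 1) ^ 4 := by ring

theorem tendsto_sqrt_sqrt_atTop : Tendsto (fun m => Nat.sqrt (Nat.sqrt m)) atTop atTop :=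
  tendsto_atTop_atTop.2 fun b => ⟨b ^ 4, fun m hm =>
    Nat.le_sqrt'.2 (Nat.le_sqrt'.2 (by linarith))⟩

theorem tendsto_exp_one_mul_one_add_four_log_div_atTop :
    Tendsto (fun t : ℕ => Real.exp 1 * (1 + 4 * Real.log (t + 1)) / t) atTop (𝓝 0) := by
  have hlog : Tendsto (fun t : ℕ => Real.log (t + 1) / t) atTop (𝓝 0) := by
    have := (Real.tendsto_pow_log_div_mul_add_atTop 1 (-1) 1 one_ne_zero).comp
      (tendsto_atTop_add_const_right _ 1 tendsto_natCast_atTop_atTop)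
    refine this.congr fun t => ?_
    simp
  have hinv : Tendsto (fun t : ℕ => (t : ℝ)⁻¹) atTop (𝓝 0) :=
    tendsto_inv_atTop_zero.comp tendsto_natCast_atTop_atTop
  simpa using ((hinv.add (hlog.const_mul 4)).const_mul (Real.exp 1)).congr fun t => by ring

theorem prod_dvd_of_subset_toFinset_normalizedFactors {α : Type*} [CommMonoidWithZero α]
    [NormalizationMonoid α] [UniqueFactorizationMonoid α] [DecidableEq α] {a : α}
    {S : Finset α}
    (hS : S ⊆ (normalizedFactors a).toFinset) : ∏ x ∈ S, x ∣ a := by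
  rcases eq_or_ne a 0 with rfl | ha
  · exact dvd_zero _
  have hle : S.val ≤ normalizedFactors a :=
    (Multiset.le_iff_subset S.nodup).2 fun x hx => Multiset.mem_toFinset.1 (hS hx)
  simpa using (Multiset.prod_dvd_prod_of_le hle).trans (prod_normalizedFactors ha).dvd

theorem Squarefree.sum_natDegree_toFinset_normalizedFactors {K : Type*} [Field K]
    [DecidableEq K] {g : K[X]} (hg : Squarefree g) :
    ∑ P ∈ (normalizedFactors g).toFinset, P.natDegree = g.natDegree := by
  have hg0 : g ≠ 0 := hg.ne_zero
  have hnodup := (squarefree_iff_nodup_normalizedFactors hg0).1 hg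
  rw [Finset.sum_eq_multiset_sum, Multiset.toFinset_val, hnodup.dedup,
    ← natDegree_multiset_prod _ (zero_notMem_normalizedFactors g)]
  exact natDegree_eq_of_degree_eq (degree_eq_degree_of_associated (prod_normalizedFactors hg0))

namespace FiniteFieldPolynomial

open scoped Classical

variable (F : Type*) [Field F] [Fintype F]

noncomputable def polysNatDegreeLE (k : ℕ) : Finset F[X] :=
  univ.image fun c : Fin (k + 1) → F => ∑ i : Fin (k + 1), monomial (i : ℕ) (c i)

noncomputable def monicsOfNatDegree (m : ℕ) : Finset F[X] :=
  (polysNatDegreeLE F m).filter fun g => g.Monic ∧ g.natDegree = m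

noncomputable def monicIrreducibles (d : ℕ) : Finset F[X] :=
  (monicsOfNatDegree F d).filter Irreducible

noncomputable def monicIrreduciblesUpTo (D : ℕ) : Finset F[X] :=
  (Icc 1 D).biUnion (monicIrreducibles F)

variable {F}

theorem mem_polysNatDegreeLE {k : ℕ} {p : F[X]} (h : p.natDegree ≤ k) :
    p ∈ polysNatDegreeLE F k := by
  refine mem_image.2 ⟨fun i => p.coeff i, mem_univ _, ?_⟩
  rw [Fin.sum_univ_eq_sum_range (fun i => monomial i (p.coeff i)) (k + 1)]
  exact (as_sum_range' p (k + 1) (Nat.lt_succ_of_le h)).symm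

theorem card_polysNatDegreeLE_le (k : ℕ) :
    #(polysNatDegreeLE F k) ≤ Fintype.card F ^ (k + 1) :=
  card_image_le.trans (by simp)

@[simp]
theorem mem_monicsOfNatDegree {m : ℕ} {g : F[X]} :
    g ∈ monicsOfNatDegree F m ↔ g.Monic ∧ g.natDegree = m :=
  ⟨fun h => (mem_filter.1 h).2, fun h => mem_filter.2 ⟨mem_polysNatDegreeLE h.2.le, h⟩⟩

@[simp]
theorem mem_monicIrreducibles {d : ℕ} {P : F[X]} :
    P ∈ monicIrreducibles F d ↔ (P.Monic ∧ P.natDegree = d) ∧ Irreducible P := by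
  simp [monicIrreducibles]

theorem mem_monicIrreduciblesUpTo {D : ℕ} {P : F[X]} :
    P ∈ monicIrreduciblesUpTo F D ↔ (P.Monic ∧ P.natDegree ≤ D) ∧ Irreducible P := by
  simp only [monicIrreduciblesUpTo, mem_biUnion, mem_Icc, mem_monicIrreducibles]
  constructor
  · rintro ⟨d, ⟨-, hdD⟩, ⟨hmon, rfl⟩, hirr⟩
    exact ⟨⟨hmon, hdD⟩, hirr⟩
  · rintro ⟨⟨hmon, hdD⟩, hirr⟩
    exact ⟨P.natDegree, ⟨hirr.natDegree_pos, hdD⟩, ⟨hmon, rfl⟩, hirr⟩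

theorem card_filter_dvd_monicsOfNatDegree_le (m : ℕ) {P : F[X]} (hP : P.Monic) :
    #((monicsOfNatDegree F m).filter (P ∣ ·)) ≤ Fintype.card F ^ (m - P.natDegree + 1) := by
  refine (card_le_card (t := (polysNatDegreeLE F (m - P.natDegree)).image (P * ·)) ?_).trans
    (card_image_le.trans (card_polysNatDegreeLE_le _))
  intro g hg
  obtain ⟨⟨hgmon, rfl⟩, h, rfl⟩ := by simpa using hg
  refine mem_image.2 ⟨h, mem_polysNatDegreeLE ?_, rfl⟩
  have h0 : h ≠ 0 := by rintro rfl; simp at hgmon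
  rw [hP.natDegree_mul' h0]
  omega

theorem mul_card_monicIrreducibles_le {d : ℕ} (hd : d ≠ 0) :
    d * #(monicIrreducibles F d) ≤ Fintype.card F ^ d := by
  set f : F[X] := X ^ Fintype.card F ^ d - X
  have hf0 : f ≠ 0 := FiniteField.X_pow_card_pow_sub_X_ne_zero F hd Fintype.one_lt_card
  have hsub : monicIrreducibles F d ⊆ (normalizedFactors f).toFinset := by
    intro P hP
    obtain ⟨⟨hmon, rfl⟩, hirr⟩ := mem_monicIrreducibles.1 hP
    have hdvd := hirr.natDegree_dvd_iff_dvd_X_pow_card_pow_sub_X.1 (dvd_refl P.natDegree)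
    rw [Nat.card_eq_fintype_card] at hdvd
    exact Multiset.mem_toFinset.2
      ((Polynomial.mem_normalizedFactors_iff hf0).2 ⟨hirr, hmon, hdvd⟩)
  have hdeg : (∏ P ∈ monicIrreducibles F d, P).natDegree = d * #(monicIrreducibles F d) := by
    rw [natDegree_prod_of_monic _ _ fun P hP => (mem_monicIrreducibles.1 hP).1.1,
      sum_congr rfl fun P hP => (mem_monicIrreducibles.1 hP).1.2, sum_const, smul_eq_mul,
      mul_comm]
  calc d * #(monicIrreducibles F d) = (∏ P ∈ monicIrreducibles F d, P).natDegree := hdeg.symm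
    _ ≤ f.natDegree :=
        natDegree_le_of_dvd (prod_dvd_of_subset_toFinset_normalizedFactors hsub) hf0
    _ = Fintype.card F ^ d :=
        FiniteField.X_pow_card_pow_sub_X_natDegree_eq F hd Fintype.one_lt_card


theorem sum_monicIrreduciblesUpTo_inv_pow_le_harmonic (D : ℕ) :
    ∑ P ∈ monicIrreduciblesUpTo F D, (Fintype.card F : ℝ)⁻¹ ^ P.natDegree ≤ harmonic D := by
  have hdisj : ((Icc 1 D : Finset ℕ) : Set ℕ).PairwiseDisjoint (monicIrreducibles F) :=
    fun d _ e _ hde => disjoint_left.2 fun P hPd hPe =>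
      hde ((mem_monicIrreducibles.1 hPd).1.2.symm.trans (mem_monicIrreducibles.1 hPe).1.2)
  rw [monicIrreduciblesUpTo, sum_biUnion hdisj, harmonic_eq_sum_Icc]
  push_cast
  refine sum_le_sum fun d hd => ?_
  have hd1 : 1 ≤ d := (mem_Icc.1 hd).1
  have hd0 : (0 : ℝ) < d := by exact_mod_cast hd1
  have hcount : (d : ℝ) * #(monicIrreducibles F d) ≤ (Fintype.card F : ℝ) ^ d := by
    exact_mod_cast mul_card_monicIrreducibles_le (F := F) (by omega)
  rw [sum_congr rfl fun P hP => by rw [(mem_monicIrreducibles.1 hP).1.2], sum_const,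
    nsmul_eq_mul, inv_pow, ← div_eq_mul_inv, div_le_iff₀ (by positivity), inv_mul_eq_div,
    le_div_iff₀ hd0]
  linarith

end FiniteFieldPolynomial

open FiniteFieldPolynomial

section Carmichael

open scoped Classical

variable {F : Type} [Field F] [Fintype F]

theorem IsCarmichaelPoly.large_factor_or_many_small_factors {g : F[X]} (hg : IsCarmichaelPoly g)
    {s : ℕ} (hs : s ≠ 0) (hsg : s ≤ g.natDegree) :
    (∃ d ∈ g.natDegree.divisors, g.natDegree < d * s ∧
        ∃ P ∈ monicIrreducibles F d, P ∣ g) ∨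
      ∃ S ∈ (monicIrreduciblesUpTo F (g.natDegree / s)).powersetCard s,
        ∏ P ∈ S, P ∣ g := by
  obtain ⟨hsq, -, hpos, hdegdvd⟩ := hg
  set T := (normalizedFactors g).toFinset
  have hT : ∀ P ∈ T, Irreducible P ∧ P.Monic ∧ P ∣ g := fun P hP =>
    (Polynomial.mem_normalizedFactors_iff hsq.ne_zero).1 (Multiset.mem_toFinset.1 hP)
  by_cases hlarge : ∃ P ∈ T, g.natDegree < P.natDegree * s
  · left
    obtain ⟨P, hP, hlt⟩ := hlarge
    obtain ⟨hirr, hmon, hPg⟩ := hT P hP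
    exact ⟨P.natDegree, Nat.mem_divisors.2 ⟨hdegdvd P hmon hirr hPg, hpos.ne'⟩, hlt, P,
      mem_monicIrreducibles.2 ⟨⟨hmon, rfl⟩, hirr⟩, hPg⟩
  · right
    simp only [not_exists, not_and, not_lt] at hlarge
    have hsmall : ∀ P ∈ T, P.natDegree ≤ g.natDegree / s := fun P hP =>
      (Nat.le_div_iff_mul_le (Nat.pos_of_ne_zero hs)).2 (hlarge P hP)
    -- the factors of degree `≤ m / s` have total degree `m`, so there are at least `s` of them
    have hcard : s ≤ #T := by
      by_contra! hlt
      have hsum : g.natDegree ≤ #T * (g.natDegree / s) := by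
        calc g.natDegree = ∑ P ∈ T, P.natDegree :=
              hsq.sum_natDegree_toFinset_normalizedFactors.symm
          _ ≤ #T * (g.natDegree / s) := sum_le_card_nsmul T _ _ hsmall
      have hquot : s * (g.natDegree / s) ≤ g.natDegree := Nat.mul_div_le _ _
      have hquot_pos : 0 < g.natDegree / s := Nat.div_pos hsg (Nat.pos_of_ne_zero hs)
      nlinarith [Nat.mul_le_mul_right (g.natDegree / s) (Nat.succ_le_of_lt hlt)]
    obtain ⟨S, hST, rfl⟩ := exists_subset_card_eq hcard
    refine ⟨S, mem_powersetCard.2 ⟨fun P hP => ?_, rfl⟩,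
      prod_dvd_of_subset_toFinset_normalizedFactors hST⟩
    obtain ⟨hirr, hmon, -⟩ := hT P (hST hP)
    exact mem_monicIrreduciblesUpTo.2 ⟨⟨hmon, hsmall P (hST hP)⟩, hirr⟩

theorem card_filter_isCarmichaelPoly_le {m s : ℕ} (hs : s ≠ 0) (hsm : s ≤ m) :
    #((monicsOfNatDegree F m).filter IsCarmichaelPoly) ≤
      ∑ d ∈ m.divisors.filter (m < · * s),
          #(monicIrreducibles F d) * Fintype.card F ^ (m - d + 1) +
        ∑ S ∈ (monicIrreduciblesUpTo F (m / s)).powersetCard s,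
          Fintype.card F ^ (m - ∑ P ∈ S, P.natDegree + 1) := by
  let multiples (P : F[X]) := (monicsOfNatDegree F m).filter (P ∣ ·)
  have hsub : (monicsOfNatDegree F m).filter IsCarmichaelPoly ⊆
      ((m.divisors.filter (m < · * s)).biUnion fun d =>
          (monicIrreducibles F d).biUnion multiples) ∪
        ((monicIrreduciblesUpTo F (m / s)).powersetCard s).biUnion fun S =>
          multiples (∏ P ∈ S, P) := by
    intro g hg
    obtain ⟨⟨hmon, rfl⟩, hcarm⟩ := by simpa using hg
    rcases hcarm.large_factor_or_many_small_factors hs hsm with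
      ⟨d, hd, hlt, P, hP, hPg⟩ | ⟨S, hS, hSg⟩
    · exact mem_union_left _ (mem_biUnion.2 ⟨d, mem_filter.2 ⟨hd, hlt⟩,
        mem_biUnion.2 ⟨P, hP,
          mem_filter.2 ⟨mem_monicsOfNatDegree.2 ⟨hmon, rfl⟩, hPg⟩⟩⟩)
    · exact mem_union_right _ (mem_biUnion.2 ⟨S, hS,
        mem_filter.2 ⟨mem_monicsOfNatDegree.2 ⟨hmon, rfl⟩, hSg⟩⟩)
  refine (card_le_card hsub).trans ((card_union_le _ _).trans (add_le_add ?_ ?_))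
  · refine card_biUnion_le.trans (sum_le_sum fun d _ => card_biUnion_le.trans ?_)
    rw [← smul_eq_mul, ← sum_const]
    refine sum_le_sum fun P hP => ?_
    obtain ⟨⟨hmon, rfl⟩, -⟩ := mem_monicIrreducibles.1 hP
    exact card_filter_dvd_monicsOfNatDegree_le m hmon
  · refine card_biUnion_le.trans (sum_le_sum fun S hS => ?_)
    have hmon : ∀ P ∈ S, P.Monic := fun P hP =>
      (mem_monicIrreduciblesUpTo.1 ((mem_powersetCard.1 hS).1 hP)).1.1
    have hdeg : (∏ P ∈ S, P).natDegree = ∑ P ∈ S, P.natDegree :=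
      natDegree_prod_of_monic S id hmon
    exact hdeg ▸ card_filter_dvd_monicsOfNatDegree_le m (monic_prod_of_monic S id hmon)

theorem card_divisors_filter_lt_mul_le (m s : ℕ) : #(m.divisors.filter (m < · * s)) ≤ s := by
  refine (card_le_card_of_injOn (m / ·) (t := range s) ?_ ?_).trans (card_range s).le
  · intro d hd
    obtain ⟨⟨hdm, hm⟩, hlt⟩ := by simpa using hd
    have hd0 : 0 < d := Nat.pos_of_dvd_of_pos hdm (Nat.pos_of_ne_zero hm)
    simpa using (Nat.div_lt_iff_lt_mul hd0).2 (by linarith)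
  · intro d hd e he hde
    obtain ⟨⟨hdm, hm⟩, -⟩ := by simpa using hd
    obtain ⟨⟨hem, -⟩, -⟩ := by simpa using he
    rw [← Nat.div_div_self hdm hm, ← Nat.div_div_self hem hm]
    exact congrArg (m / ·) hde

theorem sum_large_factors_le (m s : ℕ) :
    ∑ d ∈ m.divisors.filter (m < · * s),
        (#(monicIrreducibles F d) : ℝ) * (Fintype.card F : ℝ) ^ (m - d + 1) ≤
      (Fintype.card F : ℝ) ^ (m + 1) * (s ^ 2 / m) := by
  set q : ℝ := (Fintype.card F : ℝ)
  have hterm : ∀ d ∈ m.divisors.filter (m < · * s),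
      (#(monicIrreducibles F d) : ℝ) * q ^ (m - d + 1) ≤ q ^ (m + 1) * (s / m) := by
    intro d hd
    obtain ⟨⟨hdm, hm⟩, hlt⟩ := by simpa using hd
    have hd0 : 0 < d := Nat.pos_of_dvd_of_pos hdm (Nat.pos_of_ne_zero hm)
    have hdle : d ≤ m := Nat.le_of_dvd (Nat.pos_of_ne_zero hm) hdm
    have hcount : (d : ℝ) * #(monicIrreducibles F d) ≤ q ^ d := by
      have h := Nat.cast_le (α := ℝ).2 (mul_card_monicIrreducibles_le (F := F) hd0.ne')
      push_cast at h
      exact h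
    have hlt' : (m : ℝ) < d * s := by exact_mod_cast hlt
    have hpow : q ^ d * q ^ (m - d + 1) = q ^ (m + 1) := by
      rw [← pow_add]; congr 1; omega
    rw [mul_div_assoc', le_div_iff₀ (by positivity)]
    calc (#(monicIrreducibles F d) : ℝ) * q ^ (m - d + 1) * m
        ≤ #(monicIrreducibles F d) * q ^ (m - d + 1) * (d * s) := by gcongr
      _ = (d * #(monicIrreducibles F d)) * q ^ (m - d + 1) * s := by ring
      _ ≤ q ^ d * q ^ (m - d + 1) * s := by gcongr
      _ = q ^ (m + 1) * s := by rw [hpow]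
  calc _ ≤ ∑ _d ∈ m.divisors.filter (m < · * s), q ^ (m + 1) * (s / m) := sum_le_sum hterm
    _ = #(m.divisors.filter (m < · * s)) * (q ^ (m + 1) * (s / m)) := by
        rw [sum_const, nsmul_eq_mul]
    _ ≤ s * (q ^ (m + 1) * (s / m)) := by
        gcongr; exact_mod_cast card_divisors_filter_lt_mul_le m s
    _ = q ^ (m + 1) * (s ^ 2 / m) := by ring

theorem sum_many_small_factors_le {m s D : ℕ} (hD : s * D ≤ m) :
    ∑ S ∈ (monicIrreduciblesUpTo F D).powersetCard s,
        (Fintype.card F : ℝ) ^ (m - ∑ P ∈ S, P.natDegree + 1) ≤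
      (Fintype.card F : ℝ) ^ (m + 1) * ((harmonic D : ℝ) ^ s / s !) := by
  set q : ℝ := (Fintype.card F : ℝ)
  set w : F[X] → ℝ := fun P => q⁻¹ ^ P.natDegree
  have hterm : ∀ S ∈ (monicIrreduciblesUpTo F D).powersetCard s,
      q ^ (m - ∑ P ∈ S, P.natDegree + 1) = q ^ (m + 1) * ∏ P ∈ S, w P := by
    intro S hS
    obtain ⟨hSD, rfl⟩ := mem_powersetCard.1 hS
    have hdeg : ∑ P ∈ S, P.natDegree ≤ m :=
      (sum_le_card_nsmul S _ D fun P hP =>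
        (mem_monicIrreduciblesUpTo.1 (hSD hP)).1.2).trans (by simpa using hD)
    rw [prod_pow_eq_pow_sum, inv_pow, ← div_eq_mul_inv, eq_div_iff (by positivity), ← pow_add]
    congr 1
    omega
  have hw : ∀ P ∈ monicIrreduciblesUpTo F D, 0 ≤ w P := fun P _ => by positivity
  rw [sum_congr rfl hterm, ← mul_sum]
  gcongr
  rw [le_div_iff₀ (by positivity), mul_comm]
  calc (s ! : ℝ) * ∑ S ∈ (monicIrreduciblesUpTo F D).powersetCard s, ∏ P ∈ S, w P
      ≤ (∑ P ∈ monicIrreduciblesUpTo F D, w P) ^ s :=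
        factorial_mul_sum_powersetCard_prod_le_sum_pow _ hw s
    _ ≤ (harmonic D : ℝ) ^ s := by
        gcongr
        exact sum_monicIrreduciblesUpTo_inv_pow_le_harmonic D

theorem harmonic_div_pow_div_factorial_le {m s : ℕ} (hs : s ≠ 0) (hsm : s ≤ m)
    (hms : m < (s + 1) ^ 4) :
    (harmonic (m / s) : ℝ) ^ s / s ! ≤ (Real.exp 1 * (1 + 4 * Real.log (s + 1)) / s) ^ s := by
  have hD : 0 < m / s := Nat.div_pos hsm (Nat.pos_of_ne_zero hs)
  have hlog : Real.log (m / s : ℕ) ≤ Real.log (((s : ℝ) + 1) ^ 4) := by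
    refine Real.log_le_log (by exact_mod_cast hD) ?_
    exact_mod_cast ((Nat.div_le_self m s).trans hms.le)
  rw [Real.log_pow] at hlog
  push_cast at hlog
  have hH : (0 : ℝ) ≤ harmonic (m / s) := by exact_mod_cast (harmonic_pos hD.ne').le
  refine (pow_div_factorial_le_exp_one_mul_div_pow hH s).trans ?_
  gcongr
  linarith [harmonic_le_one_add_log (m / s)]

theorem natCard_monic_carmichael_eq_card (m : ℕ) :
    Nat.card {g : F[X] // g.Monic ∧ IsCarmichaelPoly g ∧ g.natDegree = m} =
      #((monicsOfNatDegree F m).filter IsCarmichaelPoly) := by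
  rw [← Nat.card_eq_finsetCard]
  refine Nat.card_congr (Equiv.subtypeEquivRight fun g => ?_)
  simp only [mem_filter, mem_monicsOfNatDegree]
  tauto

/-- With `t = s = ⌊m ^ (1/4)⌋`, the two summands bound the contributions of large factors and of
many small factors to `C_q(m) / q ^ (m + 1)`. -/
noncomputable def carmichaelError (t : ℕ) : ℝ :=
  ((t : ℝ) ^ 2)⁻¹ + (Real.exp 1 * (1 + 4 * Real.log (t + 1)) / t) ^ t

theorem tendsto_carmichaelError_atTop : Tendsto carmichaelError atTop (𝓝 0) := by
  have hinv : Tendsto (fun t : ℕ => ((t : ℝ) ^ 2)⁻¹) atTop (𝓝 0) :=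
    tendsto_inv_atTop_zero.comp ((tendsto_pow_atTop two_ne_zero).comp tendsto_natCast_atTop_atTop)
  have hbase : ∀ t : ℕ, 0 ≤ Real.exp 1 * (1 + 4 * Real.log (t + 1)) / t := fun t => by
    have := Real.log_nonneg (by linarith [t.cast_nonneg (α := ℝ)] : (1 : ℝ) ≤ t + 1)
    positivity
  have hpow := tendsto_pow_self_of_tendsto_zero hbase
    tendsto_exp_one_mul_one_add_four_log_div_atTop
  rw [← add_zero (0 : ℝ)]
  exact hinv.add hpow

theorem card_filter_isCarmichaelPoly_le_pow_mul_carmichaelError {m : ℕ} (hm : m ≠ 0) :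
    (#((monicsOfNatDegree F m).filter IsCarmichaelPoly) : ℝ) ≤
      (Fintype.card F : ℝ) ^ (m + 1) * carmichaelError (Nat.sqrt (Nat.sqrt m)) := by
  set s := Nat.sqrt (Nat.sqrt m)
  have hs4 : s ^ 4 ≤ m := sqrt_sqrt_pow_four_le m
  have hms : m < (s + 1) ^ 4 := lt_sqrt_sqrt_add_one_pow_four m
  have hs : s ≠ 0 := by
    rintro hs0
    rw [hs0] at hms
    omega
  have hsm : s ≤ m := (Nat.le_self_pow (by norm_num) s).trans hs4
  have hlarge : (s : ℝ) ^ 2 / m ≤ ((s : ℝ) ^ 2)⁻¹ := by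
    have : ((s : ℝ) ^ 2) ^ 2 ≤ m := by exact_mod_cast (by linarith : (s ^ 2) ^ 2 ≤ m)
    rw [div_le_iff₀ (by positivity), inv_mul_eq_div, le_div_iff₀ (by positivity)]
    linarith
  have hcount := Nat.cast_le (α := ℝ).2 (card_filter_isCarmichaelPoly_le (F := F) hs hsm)
  push_cast at hcount
  calc _ ≤ _ := hcount
    _ ≤ (Fintype.card F : ℝ) ^ (m + 1) * (s ^ 2 / m) +
          (Fintype.card F : ℝ) ^ (m + 1) * ((harmonic (m / s) : ℝ) ^ s / s !) :=
        add_le_add (sum_large_factors_le m s) (sum_many_small_factors_le (Nat.mul_div_le m s))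
    _ ≤ _ := by
        rw [← mul_add, carmichaelError]
        gcongr
        exact harmonic_div_pow_div_factorial_le hs hsm hms

end Carmichael

/-- The natural density of Carmichael polynomials in `F_q[t]` is zero:
`(C_q(1) + ⋯ + C_q(n)) / q^n → 0` as `n → ∞`, where `C_q(m)` is the number of monic
Carmichael polynomials of degree `m`. -/
theorem carmichael_poly_density_zero (F : Type) [Field F] [Fintype F] :
    Filter.Tendsto
      (fun n : ℕ =>
        (∑ m ∈ Finset.Icc 1 n,
            (Nat.card {g : F[X] // g.Monic ∧ IsCarmichaelPoly g ∧ g.natDegree = m} : ℝ)) /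
          (Fintype.card F : ℝ) ^ n)
      Filter.atTop (nhds 0) := by
  classical
  have hq : 1 < (Fintype.card F : ℝ) := by exact_mod_cast Fintype.one_lt_card
  set C : ℕ → ℝ := fun m => #((monicsOfNatDegree F m).filter IsCarmichaelPoly)
  have hratio : Tendsto (fun m => C m / (Fintype.card F : ℝ) ^ m) atTop (𝓝 0) := by
    have hlim := (tendsto_carmichaelError_atTop.comp tendsto_sqrt_sqrt_atTop).const_mul
      (Fintype.card F : ℝ)
    rw [mul_zero] at hlim
    refine squeeze_zero' (Eventually.of_forall fun m => by positivity) ?_ hlim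
    filter_upwards [eventually_ne_atTop 0] with m hm
    rw [div_le_iff₀ (by positivity), mul_right_comm, ← pow_succ']
    exact card_filter_isCarmichaelPoly_le_pow_mul_carmichaelError hm
  refine squeeze_zero (fun n => by positivity) (fun n => ?_)
    (tendsto_sum_range_succ_div_pow hq hratio)
  simp only [natCard_monic_carmichael_eq_card]
  gcongr
  intro m hm
  rw [mem_Icc] at hm
  exact mem_range.2 (by omega)
end

section
/- Let O_K ⊂ O_L be an extension of Dedekind domains with L/K finite separable of degree d, and let n be a squarefree ideal of O_K with |O_K/n| finite. Then nO_L is a Carmichael ideal of O_L if and only if nO_L is composite, n is coprime to the discriminant of L/K (equivalently all primes dividing n are unramified), and for each prime p | n and each prime P of O_L above p, N_K(p)^{f(P)} - 1 divides N_K(n)^d - 1, where f(P) is the residue degree. -/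
/-!
Korselt's criterion holds in any Dedekind domain: if `N ≥ 2` and `x ^ N ≡ x (mod I)` for all `x`,
then `I` is radical, hence squarefree, so the congruence holds modulo `I` iff it holds modulo
every prime `P ⊇ I`; modulo `P` it says that the cyclic group `(B/P)ˣ` has exponent dividing
`N - 1`, i.e. `|B/P| - 1 ∣ N - 1`. For `I = nB` it remains to compute the norms:
`|B/nB| = |A/n|^d` by the Chinese remainder theorem, because `[B/pB : A/p] = d` for every prime
`p ∣ n`, and `|B/P| = |A/p|^{f(P)}` for `P` over `p`.
-/

open Ideal Module

theorem FiniteField.forall_pow_eq_self_iff_s16 {F : Type*} [Field F] [Finite F] {N : ℕ}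
    (hN : N ≠ 0) : (∀ x : F, x ^ N = x) ↔ Nat.card F - 1 ∣ N - 1 := by
  have hunits : (∀ x : F, x ^ N = x) ↔ ∀ u : Fˣ, u ^ (N - 1) = 1 := by
    refine ⟨fun h u => Units.ext ?_, fun h x => ?_⟩
    · refine mul_right_cancel₀ u.ne_zero ?_
      rw [Units.val_pow_eq_pow_val, ← pow_succ, Nat.sub_add_cancel (by omega), h, Units.val_one,
        one_mul]
    · rcases eq_or_ne x 0 with rfl | hx
      · exact zero_pow hN
      · have := congrArg Units.val (h (Units.mk0 x hx))
        rw [Units.val_pow_eq_pow_val, Units.val_mk0, Units.val_one] at this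
        rw [← Nat.sub_add_cancel (Nat.one_le_iff_ne_zero.mpr hN), pow_succ, this, one_mul]
  rw [hunits, ← Monoid.exponent_dvd_iff_forall_pow_eq_one, IsCyclic.exponent_eq_card,
    Nat.card_units]

theorem Ideal.isRadical_of_forall_pow_sub_mem {R : Type*} [CommRing R] {I : Ideal R} {N : ℕ}
    (hN : 2 ≤ N) (h : ∀ x : R, x ^ N - x ∈ I) : I.IsRadical :=
  (isRadical_iff_pow_one_lt N hN).mpr fun x hx => by simpa using I.sub_mem hx (h x)

theorem Ideal.isRadical_iff_squarefree {R : Type*} [CommRing R] [IsDedekindDomain R]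
    {I : Ideal R} (hI : I ≠ ⊥) : I.IsRadical ↔ Squarefree I := by
  rw [← isRadical_iff_squarefree_of_ne_zero hI]
  refine ⟨fun h k J hJ => ?_, fun h x ⟨k, hx⟩ => ?_⟩
  · rw [dvd_iff_le] at hJ ⊢
    exact fun x hx => h ⟨k, hJ (pow_mem_pow hx k)⟩
  · have hdvd : I ∣ span {x} ^ k := by rwa [span_singleton_pow, dvd_span_singleton]
    simpa [dvd_span_singleton] using h k _ hdvd

theorem Ideal.forall_pow_sub_mem_iff_card_sub_one_dvd {R : Type*} [CommRing R] {P : Ideal R}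
    [P.IsMaximal] [Finite (R ⧸ P)] {N : ℕ} (hN : N ≠ 0) :
    (∀ x : R, x ^ N - x ∈ P) ↔ Nat.card (R ⧸ P) - 1 ∣ N - 1 := by
  let := Quotient.field P
  rw [← FiniteField.forall_pow_eq_self_iff_s16 hN, Quotient.mk_surjective.forall]
  simp only [← map_pow, Quotient.eq]

theorem Ideal.korselt_criterion {R : Type*} [CommRing R] [IsDedekindDomain R] {I : Ideal R}
    (hI : I ≠ ⊥) [Finite (R ⧸ I)] {N : ℕ} (hN : 2 ≤ N) :
    (∀ x : R, x ^ N - x ∈ I) ↔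
      Squarefree I ∧ ∀ P : Ideal R, P.IsPrime → I ≤ P → Nat.card (R ⧸ P) - 1 ∣ N - 1 := by
  have hprime (P : Ideal R) (hP : P.IsPrime) (hle : I ≤ P) :
      (∀ x : R, x ^ N - x ∈ P) ↔ Nat.card (R ⧸ P) - 1 ∣ N - 1 := by
    have := hP.isMaximal (ne_bot_of_le_ne_bot hI hle)
    have := Finite.of_surjective _ (Quotient.factor_surjective hle)
    exact forall_pow_sub_mem_iff_card_sub_one_dvd (by omega)
  rw [← isRadical_iff_squarefree hI]
  refine ⟨fun h => ⟨isRadical_of_forall_pow_sub_mem hN h, fun P hP hle =>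
    (hprime P hP hle).mp fun x => hle (h x)⟩, fun ⟨hrad, hdvd⟩ x => ?_⟩
  rw [← hrad.radical, radical_eq_sInf, mem_sInf]
  rintro P ⟨hle, hP⟩
  exact (hprime P hP hle).mpr (hdvd P hP hle) x

theorem Ideal.isCoprime_map_of_isCoprime {R S : Type*} [CommRing R] [CommRing S] (f : R →+* S)
    {I J : Ideal R} (h : IsCoprime I J) : IsCoprime (I.map f) (J.map f) := by
  rw [isCoprime_iff_sup_eq] at h ⊢
  rw [← map_sup, h, map_top]

theorem Ideal.isCoprime_of_isRelPrime {R : Type*} [CommRing R] [IsDedekindDomain R]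
    {I J : Ideal R} (h : IsRelPrime I J) : IsCoprime I J := by
  rw [isCoprime_iff_gcd, ← isUnit_iff_eq_one, gcd_isUnit_iff_isRelPrime]
  exact h

theorem Ideal.card_quotient_eq_pow_inertiaDeg' {A B : Type*} [CommRing A] [CommRing B]
    [Algebra A B] [Module.Finite A B] (p : Ideal A) [p.IsMaximal] (P : Ideal B) [P.LiesOver p] :
    Nat.card (B ⧸ P) = Nat.card (A ⧸ p) ^ p.inertiaDeg' P := by
  let := Quotient.field p
  rw [inertiaDeg'_algebraMap, Module.natCard_eq_pow_finrank (K := A ⧸ p)]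

section Extension

variable {A B : Type*} (K L : Type*) [CommRing A] [IsDedekindDomain A] [CommRing B] [IsDomain B]
  [Algebra A B] [Module.Finite A B] [Field K] [Field L] [Algebra A K] [IsFractionRing A K]
  [Algebra B L] [IsFractionRing B L] [Algebra K L] [Algebra A L] [IsScalarTower A K L]
  [IsScalarTower A B L]

theorem Ideal.card_quotient_map_of_isMaximal (p : Ideal A) [p.IsMaximal] :
    Nat.card (B ⧸ p.map (algebraMap A B)) = Nat.card (A ⧸ p) ^ finrank K L := by
  let := Quotient.field p
  rw [Module.natCard_eq_pow_finrank (K := A ⧸ p), finrank_quotient_map p K L]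

theorem Ideal.card_quotient_map_of_squarefree {n : Ideal A} (hn : Squarefree n) :
    Nat.card (B ⧸ n.map (algebraMap A B)) = Nat.card (A ⧸ n) ^ finrank K L := by
  induction n using UniqueFactorizationMonoid.induction_on_coprime with
  | h0 => exact absurd hn not_squarefree_zero
  | h1 hu =>
    rw [isUnit_iff.mp hu, map_top]
    simp
  | hpr k hp =>
    obtain rfl | rfl := hn.eq_zero_or_one_of_pow_of_not_isUnit hp.not_isUnit
    · rw [pow_zero, one_eq_top, map_top]
      simp
    · have := (isPrime_of_prime hp).isMaximal hp.ne_zero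
      rw [pow_one, card_quotient_map_of_isMaximal K L]
  | hcp hxy hx hy =>
    have hcop := isCoprime_of_isRelPrime hxy
    simp only [← Submodule.cardQuot_apply] at hx hy ⊢
    rw [Ideal.map_mul, cardQuot_mul_of_coprime hcop,
      cardQuot_mul_of_coprime (isCoprime_map_of_isCoprime _ hcop),
      hx hn.of_mul_left, hy hn.of_mul_right, mul_pow]

end Extension

theorem carmichael_ideal_extension_general (A K L B : Type)
    [CommRing A] [IsDedekindDomain A] [Field K] [Field L] [CommRing B]
    [Algebra A K] [IsFractionRing A K] [Algebra K L] [FiniteDimensional K L]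
    [Algebra.IsSeparable K L]
    [Algebra A B] [Algebra B L] [Algebra A L] [IsScalarTower A B L] [IsScalarTower A K L]
    [IsIntegralClosure B A L]
    (n : Ideal A) (hsf : Squarefree n) (hfin : Finite (A ⧸ n)) :
    ((¬(Ideal.map (algebraMap A B) n).IsPrime ∧ Ideal.map (algebraMap A B) n ≠ ⊥ ∧
        Ideal.map (algebraMap A B) n ≠ ⊤) ∧
      ∀ β : B, β ^ Nat.card (B ⧸ Ideal.map (algebraMap A B) n) - β ∈
        Ideal.map (algebraMap A B) n) ↔
    ((¬(Ideal.map (algebraMap A B) n).IsPrime ∧ Ideal.map (algebraMap A B) n ≠ ⊥ ∧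
        Ideal.map (algebraMap A B) n ≠ ⊤) ∧
      Squarefree (Ideal.map (algebraMap A B) n) ∧
      ∀ p : Ideal A, p.IsPrime → p ∣ n →
        ∀ P : Ideal B, P.IsPrime → Ideal.comap (algebraMap A B) P = p →
          Nat.card (A ⧸ p) ^ (Ideal.inertiaDeg' p P) - 1 ∣
            Nat.card (A ⧸ n) ^ Module.finrank K L - 1) := by
  have : IsDomain B := (IsIntegralClosure.equiv A B L (integralClosure A L)).toMulEquiv.isDomain _
  have : IsDedekindDomain B := IsIntegralClosure.isDedekindDomain A K L B
  have : Module.Finite A B := IsIntegralClosure.finite A K L B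
  have : IsFractionRing B L := IsIntegralClosure.isFractionRing_of_finite_extension A K L B
  have : Finite (B ⧸ n.map (algebraMap A B)) := Module.finite_of_finite (A ⧸ n)
  refine and_congr_right fun ⟨_, hIbot, hItop⟩ => ?_
  have : Nontrivial (B ⧸ n.map (algebraMap A B)) := Quotient.nontrivial_iff.mpr hItop
  rw [korselt_criterion hIbot Finite.one_lt_card, card_quotient_map_of_squarefree K L hsf]
  refine and_congr_right fun _ => ⟨fun h p hp hpn P hP hPp => ?_, fun h P hP hle => ?_⟩
  · have : p.IsMaximal := hp.isMaximal (ne_bot_of_le_ne_bot hsf.ne_zero (le_of_dvd hpn))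
    have : P.LiesOver p := ⟨hPp.symm⟩
    rw [← card_quotient_eq_pow_inertiaDeg' p P]
    exact h P hP (map_le_iff_le_comap.mpr (hPp ▸ le_of_dvd hpn))
  · have hnle : n ≤ P.under A := map_le_iff_le_comap.mp hle
    have : (P.under A).IsMaximal := (hP.under A).isMaximal (ne_bot_of_le_ne_bot hsf.ne_zero hnle)
    rw [card_quotient_eq_pow_inertiaDeg' (P.under A) P]
    exact h _ (hP.under A) (dvd_iff_le.mpr hnle) P hP rfl

/-- Behavior of Carmichael ideals in extensions of Dedekind domains: let `A` be a Dedekind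
domain with fraction field `K`, `L/K` finite separable of degree `d`, and `B` the integral
closure of `A` in `L` (a Dedekind domain). Let `n` be a squarefree ideal of `A` with finite
residue ring. Then `nB` is a Carmichael ideal of `B` if and only if
(1) `nB` is composite (not prime, nonzero, proper),
(2) every prime dividing `n` is unramified in `L` (equivalently, `n` is coprime to the
discriminant, i.e. `nB` is squarefree), and
(3) for each prime `p ∣ n` and each prime `P` of `B` above `p`,
`N_K(p)^{f(P)} - 1 ∣ N_K(n)^d - 1`, where `f(P)` is the residue degree. -/
theorem carmichael_ideal_extension (A K L B : Type)
    [CommRing A] [IsDedekindDomain A] [Field K] [Field L] [CommRing B]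
    [Algebra A K] [IsFractionRing A K] [Algebra K L] [FiniteDimensional K L]
    [Algebra.IsSeparable K L]
    [Algebra A B] [Algebra B L] [Algebra A L] [IsScalarTower A B L] [IsScalarTower A K L]
    [IsIntegralClosure B A L]
    (n : Ideal A) (hbot : n ≠ ⊥) (htop : n ≠ ⊤) (hsf : Squarefree n) (hfin : Finite (A ⧸ n)) :
    ((¬(Ideal.map (algebraMap A B) n).IsPrime ∧ Ideal.map (algebraMap A B) n ≠ ⊥ ∧
        Ideal.map (algebraMap A B) n ≠ ⊤) ∧
      ∀ β : B, β ^ Nat.card (B ⧸ Ideal.map (algebraMap A B) n) - β ∈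
        Ideal.map (algebraMap A B) n) ↔
    ((¬(Ideal.map (algebraMap A B) n).IsPrime ∧ Ideal.map (algebraMap A B) n ≠ ⊥ ∧
        Ideal.map (algebraMap A B) n ≠ ⊤) ∧
      Squarefree (Ideal.map (algebraMap A B) n) ∧
      ∀ p : Ideal A, p.IsPrime → p ∣ n →
        ∀ P : Ideal B, P.IsPrime → Ideal.comap (algebraMap A B) P = p →
          Nat.card (A ⧸ p) ^ (Ideal.inertiaDeg' p P) - 1 ∣
            Nat.card (A ⧸ n) ^ Module.finrank K L - 1) :=
  carmichael_ideal_extension_general A K L B n hsf hfin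
end

section
/- Let u ∈ F_q[t] be a squarefree nonconstant polynomial. Then there exist infinitely many squarefree monic polynomials w ∈ F_q[t] coprime to u such that uw is a Carmichael polynomial; in particular, every squarefree polynomial divides infinitely many Carmichael polynomials. -/
open Polynomial

open scoped Nat

/-!
Let `d = deg u`. It suffices to find a multiple `n` of `d!` and distinct divisors `mᵢ` of `n`,
all larger than `d`, with `d + ∑ mᵢ = n`: if `w` is a product of monic irreducibles of degrees
`mᵢ`, then every irreducible factor of `u * w` has degree either at most `d`, hence dividing
`d! ∣ n`, or equal to some `mᵢ ∣ n`. Such divisors exist for `n = d * c * 2 ^ k` with `c > 1`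
odd and `k ≥ c`: in `c * 2 ^ k - 1 = c * (1 + 2 + ⋯ + 2 ^ (k - 1)) + (c - 1)` the even number
`c - 1` is a sum of distinct powers `2 ^ j` with `1 ≤ j ≤ k`. Taking for `c` three times the odd
part of `d!` makes `n` a multiple of `d!`.
-/

theorem FiniteField.exists_monic_irreducible_natDegree (k : Type*) [Field k] [Finite k] {n : ℕ}
    (hn : n ≠ 0) : ∃ P : k[X], P.Monic ∧ Irreducible P ∧ P.natDegree = n := by
  obtain ⟨p, _⟩ := CharP.exists k
  have : Fact p.Prime := ⟨CharP.char_is_prime k p⟩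
  have : NeZero n := ⟨hn⟩
  obtain ⟨α, hα⟩ := Field.exists_primitive_element_of_finite_top k (Extension k p n)
  have hα_int := IsIntegral.of_finite k α
  refine ⟨minpoly k α, minpoly.monic hα_int, minpoly.irreducible hα_int, ?_⟩
  rw [← IntermediateField.adjoin.finrank hα_int, hα, IntermediateField.finrank_top',
    finrank_extension]

namespace Nat

theorem exists_finset_sum_add_one_eq_odd_mul_two_pow {c k : ℕ} (hc : Odd c) (hc1 : 1 < c)
    (hck : c ≤ k) :
    ∃ T : Finset ℕ, (∀ e ∈ T, 1 < e ∧ e ∣ c * 2 ^ k) ∧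
      ∑ e ∈ T, e + 1 = c * 2 ^ k := by
  obtain ⟨e, rfl⟩ := hc
  set T₁ := (Finset.range k).image fun i => (2 * e + 1) * 2 ^ i
  set T₂ := e.bitIndices.toFinset.image fun j => 2 ^ (j + 1)
  have hbit : ∀ j ∈ e.bitIndices.toFinset, j + 1 ≤ k := fun j hj => by
    have := two_pow_le_of_mem_bitIndices (List.mem_toFinset.mp hj)
    have := j.lt_two_pow_self
    omega
  have hdisj : Disjoint T₁ T₂ := by
    simp only [T₁, T₂, Finset.disjoint_left, Finset.mem_image]
    rintro _ ⟨i, -, rfl⟩ ⟨j, -, hij⟩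
    have hcop : Coprime (2 * e + 1) (2 ^ (j + 1)) :=
      (coprime_two_right.mpr (odd_two_mul_add_one e)).pow_right _
    have := hcop.eq_one_of_dvd (Dvd.intro _ hij.symm)
    omega
  refine ⟨T₁ ∪ T₂, ?_, ?_⟩
  · simp only [T₁, T₂, Finset.mem_union, Finset.mem_image]
    rintro _ (⟨i, hi, rfl⟩ | ⟨j, hj, rfl⟩)
    · exact ⟨by nlinarith [i.one_le_two_pow],
        mul_dvd_mul_left _ (pow_dvd_pow 2 (Finset.mem_range.mp hi).le)⟩
    · exact ⟨by rw [pow_succ]; have := j.one_le_two_pow; omega,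
        (pow_dvd_pow 2 (hbit j hj)).mul_left _⟩
  · have hgeom : ∑ i ∈ Finset.range k, 2 ^ i = 2 ^ k - 1 := by
      simpa using geomSum_eq le_rfl k
    rw [Finset.sum_union hdisj, Finset.sum_image, Finset.sum_image, ← Finset.mul_sum, hgeom]
    · simp_rw [pow_succ, ← Finset.sum_mul, Finset.sum_toFinset_bitIndices_two_pow]
      obtain ⟨t, ht⟩ : ∃ t, 2 ^ k = t + 1 :=
        ⟨2 ^ k - 1, by have := k.one_le_two_pow; omega⟩
      rw [ht, Nat.add_sub_cancel]
      ring
    · exact fun a _ b _ h => by simpa using Nat.pow_right_injective le_rfl h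
    · exact fun a _ b _ h =>
        Nat.pow_right_injective le_rfl (Nat.eq_of_mul_eq_mul_left (by omega) h)

end Nat

theorem exists_carmichael_degrees (d N : ℕ) (hd : 0 < d) :
    ∃ n : ℕ, ∃ S : Finset ℕ,
      d ! ∣ n ∧ d + N < n ∧ (∀ m ∈ S, d < m ∧ m ∣ n) ∧ d + ∑ m ∈ S, m = n := by
  obtain ⟨s, c, hc, hfac⟩ := Nat.exists_eq_two_pow_mul_odd d.factorial_ne_zero
  obtain ⟨T, hT, hsum⟩ := Nat.exists_finset_sum_add_one_eq_odd_mul_two_pow (k := s + 3 * c + N)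
    ((by decide : Odd 3).mul hc) (by have := hc.pos; omega) (by omega)
  refine ⟨d * (3 * c * 2 ^ (s + 3 * c + N)), T.image (d * ·), ?_, ?_, ?_, ?_⟩
  · rw [hfac]
    exact ⟨3 * d * 2 ^ (3 * c) * 2 ^ N, by simp only [pow_add]; ring⟩
  · have hN : N < 2 ^ (s + 3 * c + N) :=
      N.lt_two_pow_self.trans_le (Nat.pow_le_pow_right two_pos (by omega))
    generalize 2 ^ (s + 3 * c + N) = t at hN
    calc d + N < d * t + d * t := by nlinarith
      _ = d * (2 * t) := by ring
      _ ≤ d * (3 * c * t) :=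
        Nat.mul_le_mul_left d (Nat.mul_le_mul_right t (by have := hc.pos; omega))
  · simp only [Finset.mem_image]
    rintro _ ⟨e, he, rfl⟩
    exact ⟨lt_mul_of_one_lt_right hd (hT e he).1, mul_dvd_mul_left d (hT e he).2⟩
  · rw [Finset.sum_image fun a _ b _ h => Nat.eq_of_mul_eq_mul_left hd h, ← Finset.mul_sum,
      ← hsum]
    ring

section

variable {F : Type*} [Field F]

theorem Polynomial.natDegree_eq_of_irreducible_of_dvd {p q : F[X]} (hp : Irreducible p)
    (hq : Irreducible q) (hpq : p ∣ q) : p.natDegree = q.natDegree :=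
  natDegree_eq_of_degree_eq (degree_eq_degree_of_associated (hp.associated_of_dvd hq hpq))

variable {S : Finset ℕ} {P : ℕ → F[X]}

theorem squarefree_prod_of_natDegree_eq (hirr : ∀ m ∈ S, Irreducible (P m))
    (hdeg : ∀ m ∈ S, (P m).natDegree = m) : Squarefree (∏ m ∈ S, P m) := by
  refine Finset.squarefree_prod_of_pairwise_isCoprime (fun m hm m' hm' hne => ?_)
    fun m hm => (hirr m hm).squarefree
  rw [Function.onFun, (hirr m hm).isRelPrime_iff_not_dvd]
  intro hdvd
  rw [← hdeg m hm, ← hdeg m' hm',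
    natDegree_eq_of_irreducible_of_dvd (hirr m hm) (hirr m' hm') hdvd] at hne
  exact hne rfl

theorem natDegree_mem_of_irreducible_dvd_prod (hirr : ∀ m ∈ S, Irreducible (P m))
    (hdeg : ∀ m ∈ S, (P m).natDegree = m) {Q : F[X]} (hQ : Irreducible Q)
    (hQS : Q ∣ ∏ m ∈ S, P m) : Q.natDegree ∈ S := by
  obtain ⟨m, hm, hQm⟩ := hQ.prime.exists_mem_finset_dvd hQS
  rwa [natDegree_eq_of_irreducible_of_dvd hQ (hirr m hm) hQm, hdeg m hm]

theorem isCoprime_prod_of_natDegree_lt {u : F[X]} (hu : u ≠ 0)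
    (hirr : ∀ m ∈ S, Irreducible (P m)) (hdeg : ∀ m ∈ S, (P m).natDegree = m)
    (hS : ∀ m ∈ S, u.natDegree < m) : IsCoprime u (∏ m ∈ S, P m) := by
  refine IsCoprime.prod_right fun m hm => IsCoprime.symm <|
    (hirr m hm).coprime_iff_not_dvd.mpr fun hdvd => ?_
  have hle := natDegree_le_of_dvd hdvd hu
  rw [hdeg m hm] at hle
  exact (hS m hm).not_ge hle

end

theorem isCarmichaelPoly_mul {F : Type} [Field F] {u w : F[X]} (hu : Squarefree u)
    (hw : Squarefree w) (huw : IsCoprime u w) (hu0 : 0 < u.natDegree) (hw0 : 0 < w.natDegree)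
    (hfac : u.natDegree ! ∣ (u * w).natDegree)
    (hw_dvd : ∀ Q : F[X], Irreducible Q → Q ∣ w → Q.natDegree ∣ (u * w).natDegree) :
    IsCarmichaelPoly (u * w) := by
  refine ⟨squarefree_mul_iff.mpr ⟨huw.isRelPrime, hu, hw⟩, fun h => ?_, ?_,
    fun Q _ hQ hQuw => ?_⟩
  · exact (h.isUnit_or_isUnit rfl).elim (not_isUnit_of_natDegree_pos u hu0)
      (not_isUnit_of_natDegree_pos w hw0)
  · rw [natDegree_mul hu.ne_zero hw.ne_zero]
    omega
  · rcases hQ.prime.dvd_or_dvd hQuw with hQu | hQw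
    · exact (Nat.dvd_factorial hQ.natDegree_pos (natDegree_le_of_dvd hQu hu.ne_zero)).trans hfac
    · exact hw_dvd Q hQ hQw

/-- Every squarefree nonconstant polynomial `u ∈ F_q[t]` divides infinitely many Carmichael
polynomials: there are infinitely many squarefree monic `w` coprime to `u` such that `u * w`
is a Carmichael polynomial. -/
theorem squarefree_divides_infinitely_many_carmichael (F : Type) [Field F] [Fintype F]
    (u : F[X]) (hu : Squarefree u) (hdeg : 0 < u.natDegree) :
    ∀ N : ℕ, ∃ w : F[X], w.Monic ∧ Squarefree w ∧ IsCoprime u w ∧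
      IsCarmichaelPoly (u * w) ∧ N ≤ w.natDegree := by
  intro N
  obtain ⟨n, S, hfac, hN, hS, hsum⟩ := exists_carmichael_degrees u.natDegree N hdeg
  have hP : ∀ m ∈ S, ∃ P : F[X], P.Monic ∧ Irreducible P ∧ P.natDegree = m := fun m hm =>
    FiniteField.exists_monic_irreducible_natDegree F (by have := (hS m hm).1; omega)
  choose! P hP_monic hP_irr hP_deg using hP
  have hw_monic : (∏ m ∈ S, P m).Monic := monic_prod_of_monic _ _ hP_monic
  have hw_deg : (∏ m ∈ S, P m).natDegree = n - u.natDegree := by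
    rw [natDegree_prod_of_monic _ _ hP_monic, Finset.sum_congr rfl hP_deg]
    omega
  have huw_deg : (u * ∏ m ∈ S, P m).natDegree = n := by
    rw [natDegree_mul hu.ne_zero hw_monic.ne_zero, hw_deg]
    omega
  have hw_sq := squarefree_prod_of_natDegree_eq hP_irr hP_deg
  have hcop := isCoprime_prod_of_natDegree_lt hu.ne_zero hP_irr hP_deg fun m hm => (hS m hm).1
  refine ⟨_, hw_monic, hw_sq, hcop, isCarmichaelPoly_mul hu hw_sq hcop hdeg (by omega)
    (huw_deg ▸ hfac) fun Q hQ hQw => huw_deg ▸ (hS _ ?_).2, by omega⟩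
  exact natDegree_mem_of_irreducible_dvd_prod hP_irr hP_deg hQ hQw
end
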